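/- arXiv:2307.01928 — 5 statements merged into one kernel-verified Lean document; each statement's English description precedes it below -/
import Mathlib

section
/- Let X be a measurable space and Y a finite nonempty label set. Let (X_1,Y_1),…,(X_{N+1},Y_{N+1}) be i.i.d. random pairs with values in X × Y, and let f̂ : X → Y → ℝ be a measurable confidence function. Define the nonconformity scores s_i = 1 − f̂(X_i)_{Y_i} for i = 1,…,N+1. Fix ε ∈ (0,1), set k = ⌈(N+1)(1−ε)⌉, assume k ≤ N, and let q̂ be the k-th smallest value of the multiset {s_1,…,s_N}. Define the prediction set C(x) = {y ∈ Y : f̂(x)_y ≥ 1 − q̂}. Then P(Y_{N+1} ∈ C(X_{N+1})) ≥ 1 − ε. Consequently, a planner that executes the plan when C(X_{N+1}) is a singleton and otherwise asks a human who selects the true label whenever it lies in C(X_{N+1}) succeeds with probability at least 1 − ε (Proposition 1, single-step uncertainty alignment). -/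
open MeasureTheory ProbabilityTheory
open scoped ENNReal

/-- The k-th smallest value (1-indexed) of the multiset of values of `v`. -/
noncomputable def kthSmallest {N : ℕ} (v : Fin N → ℝ) (k : ℕ) : ℝ :=
  ((List.ofFn v : Multiset ℝ).sort (· ≤ ·)).getD (k - 1) 0

lemma sum_ite_lt (L m : ℕ) :
    (∑ i : Fin L, if (i : ℕ) < m then 1 else 0) = min m L := by
  induction L with
  | zero => simp
  | succ L ih =>
    rw [Fin.sum_univ_castSucc]
    simp only [Fin.coe_castSucc, Fin.val_last, ih]
    rcases le_or_gt m L with h | h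
    · rw [if_neg (by omega)]; omega
    · rw [if_pos (by omega)]; omega

lemma countP_ofFn {n : ℕ} (v : Fin n → ℝ) (p : ℝ → Bool) :
    (List.ofFn v).countP p = ∑ i : Fin n, if p (v i) then 1 else 0 := by
  induction n with
  | zero => simp
  | succ n ih =>
    rw [List.ofFn_succ, List.countP_cons, Fin.sum_univ_succ, ih (fun i => v i.succ)]
    omega

lemma le_kthSmallest_iff {N : ℕ} (v : Fin N → ℝ) (k : ℕ) (hk1 : 1 ≤ k) (hkN : k ≤ N) (x : ℝ) :
    x ≤ kthSmallest v k ↔ (∑ i : Fin N, if v i < x then 1 else 0) < k := by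
  set l : List ℝ := (List.ofFn v : Multiset ℝ).sort (· ≤ ·) with hl
  have hperm : l.Perm (List.ofFn v) := by
    rw [← Multiset.coe_eq_coe]
    exact Multiset.sort_eq _ _
  have hlen : l.length = N := by
    rw [hperm.length_eq, List.length_ofFn]
  have hsort : l.Pairwise (· ≤ ·) := Multiset.pairwise_sort _ _
  have hcount : (∑ i : Fin N, if v i < x then 1 else 0)
      = ∑ i : Fin l.length, if l.get i < x then 1 else 0 := by
    have h1 := countP_ofFn v (fun a => decide (a < x))
    have h2 := countP_ofFn l.get (fun a => decide (a < x))
    rw [List.ofFn_get] at h2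
    rw [← hperm.countP_eq] at h1
    simp only [decide_eq_true_eq] at h1 h2
    rw [← h1, h2]
  have hm : k - 1 < l.length := by omega
  have hget : kthSmallest v k = l.get ⟨k - 1, hm⟩ := by
    rw [kthSmallest, ← hl, List.getD_eq_getElem l 0 hm]
    simp
  rw [hcount, hget]
  constructor
  · intro hx
    calc (∑ i : Fin l.length, if l.get i < x then 1 else 0)
        ≤ ∑ i : Fin l.length, if (i : ℕ) < k - 1 then 1 else 0 := by
          apply Finset.sum_le_sum
          intro i _
          by_cases h : l.get i < x
          · rw [if_pos h, if_pos]
            by_contra hc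
            push_neg at hc
            have : l.get ⟨k - 1, hm⟩ ≤ l.get i :=
              hsort.rel_get_of_le (by simpa [Fin.le_def] using hc)
            linarith
          · rw [if_neg h]; positivity
      _ = min (k - 1) l.length := sum_ite_lt _ _
      _ < k := by omega
  · intro hx
    by_contra hc
    push_neg at hc
    have hge : (∑ i : Fin l.length, if (i : ℕ) < k then 1 else 0)
        ≤ ∑ i : Fin l.length, if l.get i < x then 1 else 0 := by
      apply Finset.sum_le_sum
      intro i _
      by_cases h : (i : ℕ) < k
      · rw [if_pos h, if_pos]
        have : l.get i ≤ l.get ⟨k - 1, hm⟩ :=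
          hsort.rel_get_of_le (by simp [Fin.le_def]; omega)
        linarith
      · rw [if_neg h]; positivity
    rw [sum_ite_lt] at hge
    omega

lemma rank_count_ge {n : ℕ} (k : ℕ) (hk : k ≤ n) (w : Fin n → ℝ) :
    k ≤ ∑ j : Fin n, if (∑ i : Fin n, if w i < w j then 1 else 0) < k then 1 else 0 := by
  classical
  -- tie-broken strict order
  set lt' : Fin n → Fin n → Prop := fun i j => w i < w j ∨ (w i = w j ∧ i < j) with hlt'
  have htrans : ∀ a b c, lt' a b → lt' b c → lt' a c := by
    rintro a b c (h1 | ⟨h1, h1'⟩) (h2 | ⟨h2, h2'⟩)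
    · exact Or.inl (h1.trans h2)
    · exact Or.inl (h2 ▸ h1)
    · exact Or.inl (h1 ▸ h2)
    · exact Or.inr ⟨h1.trans h2, h1'.trans h2'⟩
  have hirr : ∀ a, ¬ lt' a a := by
    rintro a (h | ⟨_, h⟩) <;> simp at h
  have htotal : ∀ a b, a ≠ b → lt' a b ∨ lt' b a := by
    intro a b hab
    rcases lt_trichotomy (w a) (w b) with h | h | h
    · exact Or.inl (Or.inl h)
    · rcases lt_or_gt_of_ne hab with h' | h'
      · exact Or.inl (Or.inr ⟨h, h'⟩)
      · exact Or.inr (Or.inr ⟨h.symm, h'⟩)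
    · exact Or.inr (Or.inl h)
  set R' : Fin n → Finset (Fin n) := fun j => Finset.univ.filter (fun i => lt' i j) with hR'
  have hcardlt : ∀ j, (R' j).card < n := by
    intro j
    have hsub : R' j ⊆ Finset.univ.erase j := by
      intro i hi
      simp only [hR', Finset.mem_filter] at hi
      refine Finset.mem_erase.2 ⟨?_, Finset.mem_univ _⟩
      rintro rfl; exact hirr _ hi.2
    calc (R' j).card ≤ (Finset.univ.erase j).card := Finset.card_le_card hsub
      _ = n - 1 := by rw [Finset.card_erase_of_mem (Finset.mem_univ _), Finset.card_univ]; simp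
      _ < n := by have : 0 < n := Fin.pos j; omega
  set F : Fin n → Fin n := fun j => ⟨(R' j).card, hcardlt j⟩ with hF
  have hkey : ∀ a b, lt' a b → (R' a).card < (R' b).card := by
    intro a b hab
    apply Finset.card_lt_card
    rw [Finset.ssubset_iff_of_subset]
    · exact ⟨a, by simp [hR', hab], by simp [hR', hirr a]⟩
    · intro i hi
      simp only [hR', Finset.mem_filter, Finset.mem_univ, true_and] at hi ⊢
      exact htrans _ _ _ hi hab
  have hinj : Function.Injective F := by
    intro a b hab
    by_contra hne
    rcases htotal a b hne with h | h
    · have := hkey a b h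
      simp only [hF, Fin.mk.injEq] at hab
      omega
    · have := hkey b a h
      simp only [hF, Fin.mk.injEq] at hab
      omega
  have hsurj : Function.Surjective F := Finite.surjective_of_injective hinj
  -- the set where F j < k has card exactly k
  have hcardF : (Finset.univ.filter (fun j => ((F j : ℕ) < k))).card
      = (Finset.univ.filter (fun m : Fin n => ((m : ℕ) < k))).card := by
    apply Finset.card_bij (fun a _ => F a)
    · intro a ha
      simp only [Finset.mem_filter, Finset.mem_univ, true_and] at ha ⊢
      exact ha
    · intro a _ b _ hab; exact hinj hab
    · intro m hm
      obtain ⟨j, rfl⟩ := hsurj m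
      simp only [Finset.mem_filter, Finset.mem_univ, true_and] at hm
      exact ⟨j, by simpa using hm, rfl⟩
  have hcard2 : (Finset.univ.filter (fun m : Fin n => ((m : ℕ) < k))).card = k := by
    rw [Finset.card_filter]
    have := sum_ite_lt n k
    simp only [this]; omega
  -- rank ≤ card R'
  have hrank_le : ∀ j, (∑ i : Fin n, if w i < w j then 1 else 0) ≤ (R' j).card := by
    intro j
    rw [← Finset.card_filter]
    apply Finset.card_le_card
    intro i hi
    simp only [Finset.mem_filter, Finset.mem_univ, true_and, hR'] at hi ⊢
    exact Or.inl hi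
  calc k = (Finset.univ.filter (fun j => ((F j : ℕ) < k))).card := by rw [hcardF, hcard2]
    _ ≤ (Finset.univ.filter
          (fun j => (∑ i : Fin n, if w i < w j then 1 else 0) < k)).card := by
        apply Finset.card_le_card
        intro j hj
        simp only [Finset.mem_filter, Finset.mem_univ, true_and, hF] at hj ⊢
        have := hrank_le j
        omega
    _ = _ := Finset.card_filter _ _
/-- **Proposition 1 (single-step uncertainty alignment).**
Given i.i.d. pairs `(Xᵢ, Yᵢ)` for `i = 1, …, N+1`, a measurable confidence function `f̂`,
nonconformity scores `sᵢ = 1 - f̂(Xᵢ)_{Yᵢ}`, `k = ⌈(N+1)(1-ε)⌉ ≤ N`, and `q̂` the k-th smallest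
calibration score, the prediction set `C(x) = {y | f̂(x)_y ≥ 1 - q̂}` covers the test label with
probability at least `1 - ε`; consequently the planner (executing the plan when `C` is a
singleton, and otherwise asking a human who selects the true label whenever it lies in `C`)
succeeds with probability at least `1 - ε`. -/
theorem single_step_uncertainty_alignment
    {Ω : Type*} [MeasureSpace Ω] [IsProbabilityMeasure (ℙ : Measure Ω)]
    {𝒳 : Type*} [MeasurableSpace 𝒳]
    {𝒴 : Type*} [Fintype 𝒴] [Nonempty 𝒴] [MeasurableSpace 𝒴] [MeasurableSingletonClass 𝒴]
    (N : ℕ) (X : Fin (N + 1) → Ω → 𝒳) (Y : Fin (N + 1) → Ω → 𝒴)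
    (hmeas : ∀ i, Measurable (fun ω => (X i ω, Y i ω)))
    (hindep : iIndepFun (fun i ω => (X i ω, Y i ω)) ℙ)
    (hident : ∀ i j, IdentDistrib (fun ω => (X i ω, Y i ω)) (fun ω => (X j ω, Y j ω)) ℙ ℙ)
    (f : 𝒳 → 𝒴 → ℝ) (hf : ∀ y, Measurable (fun x => f x y))
    (ε : ℝ) (hε : ε ∈ Set.Ioo (0 : ℝ) 1)
    (k : ℕ) (hk : k = ⌈((N : ℝ) + 1) * (1 - ε)⌉₊) (hkN : k ≤ N)
    (s : Fin (N + 1) → Ω → ℝ) (hs : ∀ i ω, s i ω = 1 - f (X i ω) (Y i ω))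
    (qhat : Ω → ℝ) (hq : ∀ ω, qhat ω = kthSmallest (fun i : Fin N => s i.castSucc ω) k)
    (C : Ω → Set 𝒴) (hC : ∀ ω, C ω = {y | f (X (Fin.last N) ω) y ≥ 1 - qhat ω}) :
    ℙ {ω | Y (Fin.last N) ω ∈ C ω} ≥ ENNReal.ofReal (1 - ε) ∧
    ℙ {ω | (∃ y, C ω = {y} ∧ Y (Fin.last N) ω = y) ∨
           ((¬ ∃ y, C ω = {y}) ∧ Y (Fin.last N) ω ∈ C ω)} ≥ ENNReal.ofReal (1 - ε) := by
  classical
  obtain ⟨hε0, hε1⟩ := hε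
  have hk1 : 1 ≤ k := by
    rw [hk]
    have h0 : (0 : ℝ) < ((N : ℝ) + 1) * (1 - ε) := by
      have : (0:ℝ) < (N:ℝ) + 1 := by positivity
      nlinarith
    exact Nat.ceil_pos.mpr h0
  -- measurability of scores
  have hg : Measurable (fun p : 𝒳 × 𝒴 => 1 - f p.1 p.2) := by
    have h1 : Measurable (fun p : 𝒳 × 𝒴 => f p.1 p.2) :=
      measurable_from_prod_countable_left (fun y => hf y)
    exact measurable_const.sub h1
  have hs_eq : ∀ i, s i = (fun p : 𝒳 × 𝒴 => 1 - f p.1 p.2) ∘ (fun ω => (X i ω, Y i ω)) := by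
    intro i; funext ω; simp [hs, Function.comp]
  have hsm : ∀ i, Measurable (s i) := fun i => (hs_eq i) ▸ hg.comp (hmeas i)
  have hsindep : iIndepFun s ℙ := by
    have h := hindep.comp (fun _ => (fun p : 𝒳 × 𝒴 => 1 - f p.1 p.2)) (fun _ => hg)
    have : s = fun i => (fun p : 𝒳 × 𝒴 => 1 - f p.1 p.2) ∘ (fun ω => (X i ω, Y i ω)) :=
      funext hs_eq
    rw [this]; exact h
  have hsid : ∀ i j, IdentDistrib (s i) (s j) ℙ ℙ := by
    intro i j
    rw [hs_eq i, hs_eq j]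
    exact (hident i j).comp hg
  -- joint law is the product measure
  set ν : Measure ℝ := Measure.map (s (Fin.last N)) ℙ with hν
  haveI : IsProbabilityMeasure ν := Measure.isProbabilityMeasure_map (hsm _).aemeasurable
  set W : Ω → (Fin (N + 1) → ℝ) := fun ω i => s i ω with hWdef
  have hW : Measurable W := measurable_pi_lambda _ hsm
  have hpi : Measure.pi (fun _ : Fin (N + 1) => ν) = Measure.map W ℙ := by
    apply Measure.pi_eq
    intro t ht
    rw [Measure.map_apply hW (MeasurableSet.univ_pi ht)]
    have hpre : W ⁻¹' (Set.pi Set.univ t)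
        = ⋂ i ∈ (Finset.univ : Finset (Fin (N + 1))), s i ⁻¹' t i := by
      ext ω; simp [Set.mem_pi, hWdef]
    rw [hpre, hsindep.measure_inter_preimage_eq_mul Finset.univ (fun i _ => ht i)]
    refine Finset.prod_congr rfl (fun i _ => ?_)
    rw [← Measure.map_apply (hsm i) (ht i), (hsid i (Fin.last N)).map_eq]
  -- rank events
  set rk : (Fin (N + 1) → ℝ) → Fin (N + 1) → ℕ :=
    fun v j => ∑ i : Fin (N + 1), if v i < v j then 1 else 0 with hrk
  have hrkm : ∀ j, Measurable (fun v => rk v j) := by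
    intro j
    apply Finset.measurable_sum
    intro i _
    exact Measurable.ite
      (measurableSet_lt (measurable_pi_apply i) (measurable_pi_apply j))
      measurable_const measurable_const
  set E : Fin (N + 1) → Set (Fin (N + 1) → ℝ) := fun j => {v | rk v j < k} with hE
  have hEm : ∀ j, MeasurableSet (E j) := by
    intro j
    have : E j = (fun v => rk v j) ⁻¹' (Set.Iio k) := rfl
    rw [this]
    exact hrkm j measurableSet_Iio
  set A : Fin (N + 1) → Set Ω := fun j => W ⁻¹' E j with hA
  have hAm : ∀ j, MeasurableSet (A j) := fun j => hW (hEm j)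
  have hAμ : ∀ j, ℙ (A j) = Measure.pi (fun _ : Fin (N + 1) => ν) (E j) := by
    intro j
    rw [hpi, Measure.map_apply hW (hEm j)]
  -- exchangeability : all A j have the same probability
  have hAeq : ∀ j, ℙ (A j) = ℙ (A (Fin.last N)) := by
    intro j
    set σ : Equiv.Perm (Fin (N + 1)) := Equiv.swap j (Fin.last N) with hσ
    have hmp : MeasurePreserving
        (MeasurableEquiv.piCongrLeft (fun _ : Fin (N + 1) => ℝ) σ)
        (Measure.pi fun _ => ν) (Measure.pi fun _ => ν) :=
      measurePreserving_piCongrLeft (fun _ => ν) σ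
    have hco : ⇑(MeasurableEquiv.piCongrLeft (fun _ : Fin (N + 1) => ℝ) σ)
        = fun v i => v (σ.symm i) := by
      funext v
      funext i
      have h := Equiv.piCongrLeft_apply_apply (fun _ : Fin (N + 1) => ℝ) σ v (σ.symm i)
      rw [Equiv.apply_symm_apply] at h
      exact h
    have hpreE : (fun v : Fin (N + 1) → ℝ => fun i => v (σ.symm i)) ⁻¹' (E (Fin.last N))
        = E j := by
      ext v
      simp only [hE, Set.mem_preimage, Set.mem_setOf_eq, hrk]
      have hsum : (∑ i : Fin (N + 1), if v (σ.symm i) < v (σ.symm (Fin.last N)) then 1 else 0)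
          = ∑ i : Fin (N + 1), if v i < v (σ.symm (Fin.last N)) then 1 else 0 :=
        Fintype.sum_equiv σ.symm _ _ (fun i => rfl)
      have hlast : σ.symm (Fin.last N) = j := by
        rw [hσ, Equiv.symm_swap, Equiv.swap_apply_right]
      rw [hsum, hlast]
    have := hmp.measure_preimage (hEm (Fin.last N)).nullMeasurableSet
    rw [hco, hpreE] at this
    rw [hAμ j, hAμ (Fin.last N), ← this]
  -- the sum of the probabilities is at least k
  have hptwise : ∀ ω : Ω, (k : ℝ≥0∞)
      ≤ ∑ j : Fin (N + 1), (A j).indicator (fun _ => (1 : ℝ≥0∞)) ω := by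
    intro ω
    have hb := rank_count_ge k (by omega : k ≤ N + 1) (W ω)
    have hcast : ((∑ j : Fin (N + 1), if rk (W ω) j < k then 1 else 0 : ℕ) : ℝ≥0∞)
        = ∑ j : Fin (N + 1), (A j).indicator (fun _ => (1 : ℝ≥0∞)) ω := by
      push_cast
      refine Finset.sum_congr rfl (fun j _ => ?_)
      by_cases hj : rk (W ω) j < k
      · rw [if_pos hj, Set.indicator_of_mem]
        exact hj
      · rw [if_neg hj, Set.indicator_of_notMem]
        exact hj
    calc (k : ℝ≥0∞) ≤ ((∑ j : Fin (N + 1),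
          if rk (W ω) j < k then 1 else 0 : ℕ) : ℝ≥0∞) := by exact_mod_cast hb
      _ = _ := hcast
  have hsumk : (k : ℝ≥0∞) ≤ ∑ j : Fin (N + 1), ℙ (A j) := by
    calc (k : ℝ≥0∞) = ∫⁻ _, (k : ℝ≥0∞) ∂ℙ := by simp
      _ ≤ ∫⁻ ω, ∑ j : Fin (N + 1), (A j).indicator (fun _ => (1 : ℝ≥0∞)) ω ∂ℙ :=
          lintegral_mono hptwise
      _ = ∑ j : Fin (N + 1), ∫⁻ ω, (A j).indicator (fun _ => (1 : ℝ≥0∞)) ω ∂ℙ :=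
          lintegral_finset_sum _ (fun j _ => measurable_const.indicator (hAm j))
      _ = ∑ j : Fin (N + 1), ℙ (A j) := by
          refine Finset.sum_congr rfl (fun j _ => ?_)
          exact lintegral_indicator_one (hAm j)
  have hmul : (k : ℝ≥0∞) ≤ ((N : ℝ≥0∞) + 1) * ℙ (A (Fin.last N)) := by
    calc (k : ℝ≥0∞) ≤ ∑ j : Fin (N + 1), ℙ (A j) := hsumk
      _ = ∑ _j : Fin (N + 1), ℙ (A (Fin.last N)) := Finset.sum_congr rfl (fun j _ => hAeq j)
      _ = ((N + 1 : ℕ) : ℝ≥0∞) * ℙ (A (Fin.last N)) := by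
          rw [Finset.sum_const, Finset.card_univ, Fintype.card_fin, nsmul_eq_mul]
      _ = ((N : ℝ≥0∞) + 1) * ℙ (A (Fin.last N)) := by push_cast; ring_nf
  -- coverage of the last event
  have hcov : ENNReal.ofReal (1 - ε) ≤ ℙ (A (Fin.last N)) := by
    have hr : (1 - ε) ≤ (k : ℝ) / ((N : ℝ) + 1) := by
      rw [le_div_iff₀ (by positivity)]
      have := hk ▸ Nat.le_ceil (((N : ℝ) + 1) * (1 - ε))
      linarith
    calc ENNReal.ofReal (1 - ε) ≤ ENNReal.ofReal ((k : ℝ) / ((N : ℝ) + 1)) :=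
          ENNReal.ofReal_le_ofReal hr
      _ = (k : ℝ≥0∞) / ((N : ℝ≥0∞) + 1) := by
          rw [ENNReal.ofReal_div_of_pos (by positivity)]
          congr 1
          · exact ENNReal.ofReal_natCast k
          · rw [show ((N : ℝ) + 1) = ((N + 1 : ℕ) : ℝ) by push_cast; ring,
              ENNReal.ofReal_natCast]
            push_cast; ring
      _ ≤ ℙ (A (Fin.last N)) := ENNReal.div_le_of_le_mul' hmul
  -- identify the coverage event with A (Fin.last N)
  have hTeq : {ω | Y (Fin.last N) ω ∈ C ω} = A (Fin.last N) := by
    ext ω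
    simp only [Set.mem_setOf_eq, hA, Set.mem_preimage, hE, hrk, Set.mem_setOf_eq]
    have h1 : Y (Fin.last N) ω ∈ C ω ↔ s (Fin.last N) ω ≤ qhat ω := by
      rw [hC ω]
      simp only [Set.mem_setOf_eq, ge_iff_le, hs]
      constructor <;> intro h <;> linarith
    have h2 : (s (Fin.last N) ω ≤ qhat ω) ↔
        (∑ i : Fin N, if s i.castSucc ω < s (Fin.last N) ω then 1 else 0) < k := by
      rw [hq ω]
      exact le_kthSmallest_iff _ k hk1 hkN _
    have h3 : (∑ i : Fin (N + 1), if W ω i < W ω (Fin.last N) then 1 else 0)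
        = ∑ i : Fin N, if s i.castSucc ω < s (Fin.last N) ω then 1 else 0 := by
      rw [Fin.sum_univ_castSucc]
      simp [hWdef]
    rw [h1, h2, ← h3]
  constructor
  · rw [hTeq]; exact hcov
  · refine le_trans hcov (measure_mono ?_)
    rw [hTeq.symm]
    intro ω hω
    simp only [Set.mem_setOf_eq] at hω ⊢
    by_cases hsing : ∃ y, C ω = {y}
    · obtain ⟨y, hy⟩ := hsing
      left
      refine ⟨y, hy, ?_⟩
      rw [hy] at hω
      exact hω
    · exact Or.inr ⟨hsing, hω⟩
end

section
/- Let s_1,…,s_{N+1} be real-valued random variables whose joint law is exchangeable, i.e., the law of (s_{σ(1)},…,s_{σ(N+1)}) equals the law of (s_1,…,s_{N+1}) for every permutation σ of {1,…,N+1}. Let 1 ≤ k ≤ N and let s_{(k)} denote the k-th smallest value of the multiset {s_1,…,s_N}. Then P(s_{N+1} ≤ s_{(k)}) ≥ k/(N+1). -/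
open MeasureTheory ProbabilityTheory
open scoped ENNReal

lemma sorted_getD_le_iff {l : List ℝ} (hl : l.Pairwise (· ≤ ·)) {k : ℕ}
    (hk1 : 1 ≤ k) (hk : k ≤ l.length) (t : ℝ) :
    l.getD (k - 1) 0 ≤ t ↔ k ≤ l.countP (fun a => decide (a ≤ t)) := by
  have hlt : k - 1 < l.length := by omega
  rw [List.getD_eq_getElem l 0 hlt]
  constructor
  · intro h
    have h1 : (l.take k).countP (fun a => decide (a ≤ t)) = k := by
      rw [List.countP_eq_length.mpr, List.length_take, min_eq_left hk]
      intro a ha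
      rw [List.mem_iff_getElem] at ha
      obtain ⟨i, hi, rfl⟩ := ha
      have hi' : i < k := by
        have := (List.length_take : (l.take k).length = _) ▸ hi; omega
      have hil : i < l.length := by omega
      rw [List.getElem_take]
      have : l[i] ≤ l[k-1] := by
        have := hl.rel_get_of_le (a := ⟨i, hil⟩) (b := ⟨k-1, hlt⟩)
          (by simp [Fin.le_def]; omega)
        simpa using this
      simp only [decide_eq_true_iff]
      exact this.trans h
    calc k = (l.take k).countP (fun a => decide (a ≤ t)) := h1.symm
      _ ≤ (l.take k).countP (fun a => decide (a ≤ t)) + (l.drop k).countP (fun a => decide (a ≤ t)) := Nat.le_add_right _ _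
      _ = l.countP (fun a => decide (a ≤ t)) := by rw [← List.countP_append, List.take_append_drop]
  · intro h
    by_contra hcon
    push_neg at hcon
    have hdrop : (l.drop (k-1)).countP (fun a => decide (a ≤ t)) = 0 := by
      rw [List.countP_eq_zero]
      intro a ha
      rw [List.mem_iff_getElem] at ha
      obtain ⟨i, hi, rfl⟩ := ha
      have hil : k - 1 + i < l.length := by
        have := (List.length_drop : (l.drop (k-1)).length = _) ▸ hi; omega
      rw [List.getElem_drop]
      have : l[k-1] ≤ l[k-1+i] := by
        have := hl.rel_get_of_le (a := ⟨k-1, hlt⟩) (b := ⟨k-1+i, hil⟩)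
          (by simp [Fin.le_def])
        simpa using this
      simp only [decide_eq_true_iff, not_le]
      exact lt_of_lt_of_le hcon this
    have : l.countP (fun a => decide (a ≤ t)) ≤ k - 1 := by
      calc l.countP (fun a => decide (a ≤ t))
          = (l.take (k-1)).countP (fun a => decide (a ≤ t)) + (l.drop (k-1)).countP (fun a => decide (a ≤ t)) := by
            rw [← List.countP_append, List.take_append_drop]
        _ = (l.take (k-1)).countP (fun a => decide (a ≤ t)) := by rw [hdrop, Nat.add_zero]
        _ ≤ (l.take (k-1)).length := List.countP_le_length
        _ ≤ k - 1 := by rw [List.length_take]; omega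
    omega

lemma kthSmallest_le_iff {N k : ℕ} (hk1 : 1 ≤ k) (hk : k ≤ N) (v : Fin N → ℝ) (t : ℝ) :
    kthSmallest v k ≤ t ↔ k ≤ (Finset.univ.filter (fun i => v i ≤ t)).card := by
  classical
  unfold kthSmallest
  set l := ((List.ofFn v : Multiset ℝ).sort (· ≤ ·)) with hldef
  have hlen : l.length = N := by simp [hldef]
  rw [sorted_getD_le_iff (Multiset.pairwise_sort _ _) hk1 (le_trans hk hlen.ge) t]
  have key : l.countP (fun a => decide (a ≤ t))
      = (Finset.univ.filter (fun i => v i ≤ t)).card := by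
    have h1 : (l : Multiset ℝ) = (List.ofFn v : Multiset ℝ) := Multiset.sort_eq _ _
    have h2 : Multiset.countP (fun a => a ≤ t) (l : Multiset ℝ)
        = Multiset.countP (fun a => a ≤ t) ((Finset.univ.val.map v : Multiset ℝ)) := by
      rw [h1, Fin.univ_val_map]
    rw [Multiset.coe_countP] at h2
    rw [h2, Multiset.countP_map]
    rw [Finset.card, Finset.filter_val]
  rw [key]

lemma kthSmallest_congr {N k : ℕ} {v w : Fin N → ℝ}
    (h : (List.ofFn v : Multiset ℝ) = (List.ofFn w : Multiset ℝ)) :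
    kthSmallest v k = kthSmallest w k := by
  unfold kthSmallest; rw [h]

lemma key_card {N : ℕ} (x : Fin (N+1) → ℝ) {k : ℕ} (hk1 : 1 ≤ k) (hkN : k ≤ N) :
    k ≤ (Finset.univ.filter (fun j : Fin (N+1) =>
      x j ≤ kthSmallest (fun i : Fin N => x (j.succAbove i)) k)).card := by
  classical
  set t := kthSmallest x k with ht
  have h1 : k ≤ (Finset.univ.filter (fun j : Fin (N+1) => x j ≤ t)).card :=
    (kthSmallest_le_iff hk1 (by omega) x t).1 le_rfl
  refine le_trans h1 (Finset.card_le_card ?_)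
  intro j hj
  simp only [Finset.mem_filter, Finset.mem_univ, true_and] at hj ⊢
  refine hj.trans ?_
  set t' := kthSmallest (fun i : Fin N => x (j.succAbove i)) k with ht'
  have h2 : k ≤ (Finset.univ.filter (fun i : Fin N => x (j.succAbove i) ≤ t')).card :=
    (kthSmallest_le_iff hk1 hkN _ t').1 le_rfl
  have h3 : (Finset.univ.filter (fun i : Fin N => x (j.succAbove i) ≤ t')).card
      ≤ (Finset.univ.filter (fun i : Fin (N+1) => x i ≤ t')).card := by
    apply Finset.card_le_card_of_injOn (fun i => j.succAbove i)
    · intro i hi; simp only [Finset.mem_coe, Finset.mem_filter, Finset.mem_univ, true_and] at hi ⊢; exact hi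
    · exact fun a _ b _ hab => Fin.succAbove_right_injective hab
  exact (kthSmallest_le_iff hk1 (by omega) x t').2 (le_trans h2 h3)

lemma measurable_kthSmallest {N k : ℕ} (hk1 : 1 ≤ k) (hk : k ≤ N) :
    Measurable (fun v : Fin N → ℝ => kthSmallest v k) := by
  classical
  apply measurable_of_Iic
  intro t
  have hset : (fun v : Fin N → ℝ => kthSmallest v k) ⁻¹' Set.Iic t
      = ⋃ S ∈ (Finset.univ : Finset (Fin N)).powersetCard k,
          ⋂ i ∈ S, {v : Fin N → ℝ | v i ≤ t} := by
    ext v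
    simp only [Set.mem_preimage, Set.mem_Iic, Set.mem_iUnion, Set.mem_iInter,
      Set.mem_setOf_eq, Finset.mem_powersetCard, exists_prop]
    rw [kthSmallest_le_iff hk1 hk]
    constructor
    · intro h
      obtain ⟨S, hS, hcard⟩ := Finset.exists_subset_card_eq h
      exact ⟨S, ⟨Finset.subset_univ _, hcard⟩, fun i hi => by
        have := hS hi; simpa using (Finset.mem_filter.1 this).2⟩
    · rintro ⟨S, ⟨-, hcard⟩, hall⟩
      calc k = S.card := hcard.symm
        _ ≤ _ := Finset.card_le_card
          (fun i hi => Finset.mem_filter.2 ⟨Finset.mem_univ _, hall i hi⟩)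
  rw [hset]
  exact MeasurableSet.biUnion (Finset.countable_toSet _)
    (fun S _ => MeasurableSet.biInter (Finset.countable_toSet _)
      (fun i _ => measurableSet_le (measurable_pi_apply i) measurable_const))

lemma map_eq_of_image_eq {n m : ℕ} {f g : Fin n → Fin m} (hf : Function.Injective f)
    (hg : Function.Injective g)
    (h : Finset.univ.image f = Finset.univ.image g) :
    Finset.univ.val.map f = Finset.univ.val.map g := by
  classical
  have hf' : (Finset.univ.image f).val = Finset.univ.val.map f := by
    rw [Finset.image_val, Multiset.dedup_eq_self.mpr (Finset.univ.nodup.map hf)]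
  have hg' : (Finset.univ.image g).val = Finset.univ.val.map g := by
    rw [Finset.image_val, Multiset.dedup_eq_self.mpr (Finset.univ.nodup.map hg)]
  rw [← hf', ← hg', h]

lemma image_swap_castSucc {N : ℕ} (j : Fin (N + 1)) :
    Finset.univ.image (fun i : Fin N => (Equiv.swap j (Fin.last N)) i.castSucc)
      = Finset.univ.image (fun i : Fin N => j.succAbove i) := by
  classical
  ext a
  simp only [Finset.mem_image, Finset.mem_univ, true_and]
  constructor
  · rintro ⟨i, rfl⟩
    have hne : (Equiv.swap j (Fin.last N)) i.castSucc ≠ j := by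
      intro h
      have h2 : i.castSucc = Fin.last N := by
        have := congrArg (Equiv.swap j (Fin.last N)) h
        rwa [Equiv.swap_apply_self, Equiv.swap_apply_left] at this
      exact (Fin.castSucc_lt_last i).ne h2
    exact Fin.exists_succAbove_eq hne
  · rintro ⟨i, rfl⟩
    have hne : (Equiv.swap j (Fin.last N)) (j.succAbove i) ≠ Fin.last N := by
      intro h
      have := congrArg (Equiv.swap j (Fin.last N)) h
      rw [Equiv.swap_apply_self, Equiv.swap_apply_right] at this
      exact Fin.succAbove_ne j i this
    obtain ⟨m, hm⟩ : ∃ m : Fin N, m.castSucc = (Equiv.swap j (Fin.last N)) (j.succAbove i) := by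
      rw [← Fin.succAbove_last]
      exact Fin.exists_succAbove_eq hne
    refine ⟨m, ?_⟩
    have := congrArg (Equiv.swap j (Fin.last N)) hm
    rwa [Equiv.swap_apply_self] at this

lemma kthSmallest_swap {N k : ℕ} (x : Fin (N + 1) → ℝ) (j : Fin (N + 1)) :
    kthSmallest (fun i : Fin N => x ((Equiv.swap j (Fin.last N)) i.castSucc)) k
      = kthSmallest (fun i : Fin N => x (j.succAbove i)) k := by
  apply kthSmallest_congr
  rw [← Fin.univ_val_map, ← Fin.univ_val_map]
  have e1 : (fun i : Fin N => x ((Equiv.swap j (Fin.last N)) i.castSucc))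
      = x ∘ (fun i : Fin N => (Equiv.swap j (Fin.last N)) i.castSucc) := rfl
  have e2 : (fun i : Fin N => x (j.succAbove i)) = x ∘ (fun i : Fin N => j.succAbove i) := rfl
  rw [e1, e2, ← Multiset.map_map, ← Multiset.map_map]
  congr 1
  apply map_eq_of_image_eq
  · exact fun a b hab => Fin.castSucc_injective N ((Equiv.swap j (Fin.last N)).injective hab)
  · exact Fin.succAbove_right_injective
  · exact image_swap_castSucc j

/-- If `s₁, …, s_{N+1}` are real-valued random variables whose joint law is exchangeable,
and `s₍ₖ₎` denotes the k-th smallest of the first `N` of them (with `1 ≤ k ≤ N`), then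
`P(s_{N+1} ≤ s₍ₖ₎) ≥ k / (N+1)`. -/
theorem exchangeable_conformal_coverage
    {Ω : Type*} [MeasureSpace Ω] [IsProbabilityMeasure (ℙ : Measure Ω)]
    (N : ℕ) (s : Fin (N + 1) → Ω → ℝ) (hmeas : ∀ i, Measurable (s i))
    (hexch : ∀ σ : Equiv.Perm (Fin (N + 1)),
      Measure.map (fun ω => fun i => s (σ i) ω) ℙ = Measure.map (fun ω => fun i => s i ω) ℙ)
    (k : ℕ) (hk1 : 1 ≤ k) (hkN : k ≤ N) :
    ℙ {ω | s (Fin.last N) ω ≤ kthSmallest (fun i : Fin N => s i.castSucc ω) k}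
      ≥ (k : ℝ≥0∞) / ((N : ℝ≥0∞) + 1) := by
  classical
  set A : Set (Fin (N + 1) → ℝ) :=
    {x | x (Fin.last N) ≤ kthSmallest (fun i : Fin N => x i.castSucc) k} with hA
  have hAmeas : MeasurableSet A := by
    apply measurableSet_le (measurable_pi_apply _)
    exact (measurable_kthSmallest hk1 hkN).comp
      (measurable_pi_lambda _ (fun i => measurable_pi_apply _))
  set v : Ω → (Fin (N + 1) → ℝ) := fun ω i => s i ω with hv
  have hvmeas : Measurable v := measurable_pi_lambda _ hmeas
  set p := ℙ {ω | s (Fin.last N) ω ≤ kthSmallest (fun i : Fin N => s i.castSucc ω) k} with hp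
  have hpre : v ⁻¹' A = {ω | s (Fin.last N) ω
      ≤ kthSmallest (fun i : Fin N => s i.castSucc ω) k} := rfl
  set E : Fin (N + 1) → Set Ω := fun j =>
    {ω | s j ω ≤ kthSmallest (fun i : Fin N => s (j.succAbove i) ω) k} with hE
  have hEeq : ∀ j, E j = (fun ω => fun i => s ((Equiv.swap j (Fin.last N)) i) ω) ⁻¹' A := by
    intro j
    ext ω
    simp only [hE, hA, Set.mem_setOf_eq, Set.mem_preimage]
    rw [Equiv.swap_apply_right, kthSmallest_swap (fun i => s i ω) j]
  have hEmeas : ∀ j, MeasurableSet (E j) := fun j => by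
    rw [hEeq j]
    exact (measurable_pi_lambda _ (fun i => hmeas _)) hAmeas
  have hEP : ∀ j, ℙ (E j) = p := by
    intro j
    rw [hEeq j, ← Measure.map_apply (measurable_pi_lambda _ (fun i => hmeas _)) hAmeas,
      hexch (Equiv.swap j (Fin.last N)), Measure.map_apply hvmeas hAmeas, hpre, hp]
  have hcount : ∀ ω, (k : ℝ≥0∞) ≤ ∑ j : Fin (N + 1),
      (E j).indicator (fun _ => (1 : ℝ≥0∞)) ω := by
    intro ω
    have hcard := key_card (fun i => s i ω) hk1 hkN
    have heq : ∑ j : Fin (N + 1), (E j).indicator (fun _ => (1 : ℝ≥0∞)) ω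
        = ((Finset.univ.filter (fun j : Fin (N + 1) => ω ∈ E j)).card : ℝ≥0∞) := by
      rw [Finset.card_filter]
      push_cast
      apply Finset.sum_congr rfl
      intro j _
      by_cases h : ω ∈ E j <;> simp [Set.indicator_apply, h]
    rw [heq]
    have hfe : (Finset.univ.filter (fun j : Fin (N + 1) => ω ∈ E j))
        = (Finset.univ.filter (fun j : Fin (N + 1) =>
            s j ω ≤ kthSmallest (fun i : Fin N => s (j.succAbove i) ω) k)) := by
      apply Finset.filter_congr
      intro j _
      simp [hE, Set.mem_setOf_eq]
    rw [hfe]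
    exact_mod_cast hcard
  have hk' : (k : ℝ≥0∞) ≤ ∑ j : Fin (N + 1), ℙ (E j) := by
    calc (k : ℝ≥0∞) = ∫⁻ _, (k : ℝ≥0∞) ∂ℙ := by simp
      _ ≤ ∫⁻ ω, ∑ j : Fin (N + 1), (E j).indicator (fun _ => (1 : ℝ≥0∞)) ω ∂ℙ :=
          lintegral_mono hcount
      _ = ∑ j : Fin (N + 1), ∫⁻ ω, (E j).indicator (fun _ => (1 : ℝ≥0∞)) ω ∂ℙ :=
          lintegral_finset_sum _ (fun j _ => measurable_one.indicator (hEmeas j))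
      _ = ∑ j : Fin (N + 1), ℙ (E j) := by
          apply Finset.sum_congr rfl
          intro j _
          exact lintegral_indicator_one (hEmeas j)
  have hsum : ∑ j : Fin (N + 1), ℙ (E j) = ((N : ℝ≥0∞) + 1) * p := by
    rw [Finset.sum_congr rfl (fun j _ => hEP j), Finset.sum_const, Finset.card_univ,
      Fintype.card_fin, nsmul_eq_mul]
    push_cast
    ring
  rw [hsum] at hk'
  exact ENNReal.div_le_of_le_mul' hk'
end

section
/- Let X be a measurable space, Y a finite nonempty label set, and T a positive integer. Let (x̄_1, ȳ_1),…,(x̄_{N+1}, ȳ_{N+1}) be i.i.d. random pairs with x̄_i = (x_i^0,…,x_i^{T−1}) ∈ X^T and ȳ_i = (y_i^0,…,y_i^{T−1}) ∈ Y^T, and let f̂ : X → Y → ℝ be a measurable confidence function. Define the sequence-level nonconformity score s_i = 1 − min_{0 ≤ t < T} f̂(x_i^t)_{y_i^t}. Fix ε ∈ (0,1), set k = ⌈(N+1)(1−ε)⌉, assume k ≤ N, and let q̂ be the k-th smallest value of the multiset {s_1,…,s_N}. Define the causal step-level prediction sets C^t(x) = {y ∈ Y : f̂(x)_y ≥ 1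 − q̂}. Then P(for all t with 0 ≤ t < T, y_{N+1}^t ∈ C^t(x_{N+1}^t)) ≥ 1 − ε (Proposition 2, multi-step uncertainty alignment). -/
open MeasureTheory ProbabilityTheory
open scoped ENNReal

lemma aux_sorted_ge_countP {l : List ℝ} (hl : l.Pairwise (· ≤ ·)) (p : ℝ → Bool)
    (hp : ∀ a b, a ≤ b → p b = true → p a = true)
    {i : ℕ} (hi : i < l.length) (h : p l[i] = true) :
    i + 1 ≤ l.countP p := by
  have : (l.take (i+1)).countP p = (l.take (i+1)).length := by
    rw [List.countP_eq_length]
    intro a ha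
    rw [List.mem_take_iff_getElem] at ha
    obtain ⟨j, hj, rfl⟩ := ha
    have hji : j ≤ i := by omega
    rcases eq_or_lt_of_le hji with rfl | hji'
    · exact h
    · have hle : l[j] ≤ l[i] := hl.rel_get_of_lt (a := ⟨j, by omega⟩) (b := ⟨i, hi⟩) hji'
      exact hp _ _ hle h
  have h2 : (l.take (i+1)).length = i + 1 := by
    rw [List.length_take]; omega
  calc i + 1 = (l.take (i+1)).countP p := by rw [this, h2]
    _ ≤ l.countP p := by
        conv_rhs => rw [← List.take_append_drop (i+1) l]
        rw [List.countP_append]; omega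

lemma aux_sorted_countP_le {l : List ℝ} (hl : l.Pairwise (· ≤ ·)) (p : ℝ → Bool)
    (hp : ∀ a b, a ≤ b → p b = true → p a = true)
    {i : ℕ} (hi : i < l.length) (h : ¬ p l[i] = true) :
    l.countP p ≤ i := by
  have hsplit : l.countP p = (l.take i).countP p + (l.drop i).countP p := by
    conv_lhs => rw [← List.take_append_drop i l]
    rw [List.countP_append]
  have h0 : (l.drop i).countP p = 0 := by
    rw [List.countP_eq_zero]
    intro a ha
    rw [List.mem_drop_iff_getElem] at ha
    obtain ⟨j, hj, rfl⟩ := ha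
    intro hpa
    apply h
    rcases Nat.eq_zero_or_pos j with rfl | hj0
    · simpa using hpa
    · have hle : l[i] ≤ l[i+j] := hl.rel_get_of_lt (a := ⟨i, hi⟩) (b := ⟨i+j, by omega⟩) (by simp; omega)
      exact hp _ _ hle hpa
  have h1 : (l.take i).countP p ≤ i := by
    calc (l.take i).countP p ≤ (l.take i).length := List.countP_le_length
      _ ≤ i := by rw [List.length_take]; omega
  omega

lemma aux_card_filter_eq_sort_countP {n : ℕ} (v : Fin n → ℝ) (P : ℝ → Prop) [DecidablePred P] :
    ((List.ofFn v : Multiset ℝ).sort (· ≤ ·)).countP (fun a => decide (P a))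
      = (Finset.univ.filter (fun i => P (v i))).card := by
  have hperm : ((List.ofFn v : Multiset ℝ).sort (· ≤ ·)).Perm (List.ofFn v) :=
    Multiset.coe_eq_coe.mp (Multiset.sort_eq _ _)
  rw [hperm.countP_eq, List.ofFn_eq_map, List.countP_map, Fin.univ_def]
  simp [Finset.filter, Finset.card, List.countP_eq_length_filter, Function.comp_def]

lemma aux_sort_length {n : ℕ} (v : Fin n → ℝ) :
    ((List.ofFn v : Multiset ℝ).sort (· ≤ ·)).length = n := by
  rw [Multiset.length_sort]
  simp

lemma aux_kthSmallest_eq_getElem {n k : ℕ} (hk1 : 1 ≤ k) (hkn : k ≤ n) (v : Fin n → ℝ) :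
    kthSmallest v k
      = ((List.ofFn v : Multiset ℝ).sort (· ≤ ·))[k-1]'(by rw [aux_sort_length]; omega) := by
  rw [kthSmallest, List.getD_eq_getElem]

lemma aux_le_kthSmallest_of_count_lt {n k : ℕ} (hk1 : 1 ≤ k) (hkn : k ≤ n) (v : Fin n → ℝ)
    (t : ℝ) (h : (Finset.univ.filter (fun j => v j < t)).card < k) : t ≤ kthSmallest v k := by
  rw [aux_kthSmallest_eq_getElem hk1 hkn]
  set l := ((List.ofFn v : Multiset ℝ).sort (· ≤ ·)) with hldef
  by_contra hlt
  push_neg at hlt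
  have hcnt : (k-1) + 1 ≤ l.countP (fun a => decide (a < t)) := by
    apply aux_sorted_ge_countP (Multiset.pairwise_sort _ _)
    · intro a b hab hb
      simp only [decide_eq_true_eq] at *
      linarith
    · simp only [decide_eq_true_eq]
      exact hlt
  rw [hldef] at hcnt
  rw [aux_card_filter_eq_sort_countP v (fun a => a < t)] at hcnt
  omega

lemma aux_count_le_kthSmallest {n k : ℕ} (hk1 : 1 ≤ k) (hkn : k ≤ n) (v : Fin n → ℝ) :
    k ≤ (Finset.univ.filter (fun i => v i ≤ kthSmallest v k)).card := by
  rw [← aux_card_filter_eq_sort_countP v (fun a => a ≤ kthSmallest v k)]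
  have := aux_kthSmallest_eq_getElem hk1 hkn v
  set l := ((List.ofFn v : Multiset ℝ).sort (· ≤ ·)) with hldef
  have h := aux_sorted_ge_countP (l := l) (Multiset.pairwise_sort _ _)
    (p := fun a => decide (a ≤ kthSmallest v k))
    (by intro a b hab hb; simp only [decide_eq_true_eq] at *; linarith)
    (i := k-1) (by rw [aux_sort_length]; omega)
    (by simp only [decide_eq_true_eq]; rw [this])
  omega

lemma aux_count_lt_kthSmallest {n k : ℕ} (hk1 : 1 ≤ k) (hkn : k ≤ n) (v : Fin n → ℝ) :
    (Finset.univ.filter (fun i => v i < kthSmallest v k)).card < k := by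
  rw [← aux_card_filter_eq_sort_countP v (fun a => a < kthSmallest v k)]
  have heq := aux_kthSmallest_eq_getElem hk1 hkn v
  set l := ((List.ofFn v : Multiset ℝ).sort (· ≤ ·)) with hldef
  have h := aux_sorted_countP_le (l := l) (Multiset.pairwise_sort _ _)
    (p := fun a => decide (a < kthSmallest v k))
    (by intro a b hab hb; simp only [decide_eq_true_eq] at *; linarith)
    (i := k-1) (by rw [aux_sort_length]; omega)
    (by simp only [decide_eq_true_eq]; rw [heq]; exact lt_irrefl _)
  omega

lemma aux_card_filter_comp_equiv {ι : Type*} [Fintype ι] [DecidableEq ι] (e : Equiv.Perm ι)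
    (P : ι → Prop) [DecidablePred P] :
    (Finset.univ.filter fun j => P (e j)).card = (Finset.univ.filter P).card := by
  apply Finset.card_bij' (fun j _ => e j) (fun j _ => e.symm j)
  · intro a ha; simp at ha ⊢; exact ha
  · intro a ha; simp at ha ⊢; simpa using ha
  · intro a _; simp
  · intro a _; simp

/-- **Proposition 2 (multi-step uncertainty alignment).**
Given i.i.d. pairs of sequences `(x̄ᵢ, ȳᵢ) ∈ 𝒳^T × 𝒴^T`, a measurable confidence function `f̂`,
sequence-level nonconformity scores `sᵢ = 1 - min_t f̂(xᵢᵗ)_{yᵢᵗ}`, `k = ⌈(N+1)(1-ε)⌉ ≤ N`,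
and `q̂` the k-th smallest calibration score, the causally constructed step-level prediction
sets `Cᵗ(x) = {y | f̂(x)_y ≥ 1 - q̂}` cover the whole test label sequence with probability at
least `1 - ε`. -/
theorem multi_step_uncertainty_alignment
    {Ω : Type*} [MeasureSpace Ω] [IsProbabilityMeasure (ℙ : Measure Ω)]
    {𝒳 : Type*} [MeasurableSpace 𝒳]
    {𝒴 : Type*} [Fintype 𝒴] [Nonempty 𝒴] [MeasurableSpace 𝒴] [MeasurableSingletonClass 𝒴]
    (T : ℕ) (hT : 0 < T) (N : ℕ)
    (x : Fin (N + 1) → Ω → Fin T → 𝒳) (y : Fin (N + 1) → Ω → Fin T → 𝒴)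
    (hmeas : ∀ i, Measurable (fun ω => (x i ω, y i ω)))
    (hindep : iIndepFun (fun i ω => (x i ω, y i ω)) ℙ)
    (hident : ∀ i j, IdentDistrib (fun ω => (x i ω, y i ω)) (fun ω => (x j ω, y j ω)) ℙ ℙ)
    (f : 𝒳 → 𝒴 → ℝ) (hf : ∀ y', Measurable (fun x' => f x' y'))
    (ε : ℝ) (hε : ε ∈ Set.Ioo (0 : ℝ) 1)
    (k : ℕ) (hk : k = ⌈((N : ℝ) + 1) * (1 - ε)⌉₊) (hkN : k ≤ N)
    (s : Fin (N + 1) → Ω → ℝ)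
    (hs : ∀ i ω, s i ω =
      1 - Finset.univ.inf' ⟨⟨0, hT⟩, Finset.mem_univ _⟩ (fun t => f (x i ω t) (y i ω t)))
    (qhat : Ω → ℝ) (hq : ∀ ω, qhat ω = kthSmallest (fun i : Fin N => s i.castSucc ω) k)
    (C : Fin T → Ω → Set 𝒴)
    (hC : ∀ t ω, C t ω = {y' | f (x (Fin.last N) ω t) y' ≥ 1 - qhat ω}) :
    ℙ {ω | ∀ t : Fin T, y (Fin.last N) ω t ∈ C t ω} ≥ ENNReal.ofReal (1 - ε) := by
  classical
  have hk1 : 1 ≤ k := by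
    rw [hk]
    rw [Nat.one_le_iff_ne_zero, ← Nat.pos_iff_ne_zero, Nat.ceil_pos]
    have h1 : (0:ℝ) < (N:ℝ) + 1 := by positivity
    nlinarith [hε.1, hε.2]
  -- the nonconformity function
  set F : ((Fin T → 𝒳) × (Fin T → 𝒴)) → ℝ :=
    fun p => 1 - Finset.univ.inf' ⟨⟨0, hT⟩, Finset.mem_univ _⟩ (fun t => f (p.1 t) (p.2 t))
    with hF
  have hFmeas : Measurable F := by
    apply Measurable.const_sub
    have hterm : ∀ t : Fin T, Measurable
        (fun p : (Fin T → 𝒳) × (Fin T → 𝒴) => f (p.1 t) (p.2 t)) := by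
      intro t
      have : (fun p : (Fin T → 𝒳) × (Fin T → 𝒴) => f (p.1 t) (p.2 t))
          = fun p => ∑ y' : 𝒴, if p.2 t = y' then f (p.1 t) y' else 0 := by
        funext p
        rw [Finset.sum_ite_eq]
        simp
      rw [this]
      apply Finset.measurable_sum
      intro y' _
      have hm : Measurable (fun p : (Fin T → 𝒳) × (Fin T → 𝒴) => p.2 t) :=
        (measurable_pi_apply t).comp measurable_snd
      apply Measurable.ite
      · exact hm (measurableSet_singleton y')
      · exact (hf y').comp ((measurable_pi_apply t).comp measurable_fst)
      · exact measurable_const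
    have hrw : (fun p : (Fin T → 𝒳) × (Fin T → 𝒴) =>
        Finset.univ.inf' ⟨⟨0, hT⟩, Finset.mem_univ _⟩ (fun t => f (p.1 t) (p.2 t)))
        = fun p => ⨅ t : Fin T, f (p.1 t) (p.2 t) := by
      funext p
      haveI : Nonempty (Fin T) := ⟨⟨0, hT⟩⟩
      exact Finset.inf'_univ_eq_ciInf _
    rw [hrw]
    exact Measurable.iInf hterm
  have hsF : ∀ i, s i = fun ω => F (x i ω, y i ω) := by
    intro i; funext ω; rw [hs i ω]
  have hsmeas : ∀ i, Measurable (s i) := by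
    intro i; rw [hsF i]; exact hFmeas.comp (hmeas i)
  -- independence and identical distribution of scores
  have hsindep : iIndepFun s ℙ := by
    have := hindep.comp (fun _ => F) (fun _ => hFmeas)
    have heq : (fun i => F ∘ (fun ω => (x i ω, y i ω))) = s := by
      funext i; rw [hsF i]; rfl
    rwa [heq] at this
  set μ : Measure ℝ := Measure.map (s (Fin.last N)) ℙ with hμ
  have hμprob : IsProbabilityMeasure μ := Measure.isProbabilityMeasure_map (hsmeas _).aemeasurable
  have hident' : ∀ i, Measure.map (s i) ℙ = μ := by
    intro i
    have h1 : IdentDistrib (s i) (s (Fin.last N)) ℙ ℙ := by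
      rw [hsF i, hsF (Fin.last N)]
      exact (hident i (Fin.last N)).comp hFmeas
    exact h1.map_eq
  -- joint law is the product measure
  set g : Ω → (Fin (N+1) → ℝ) := fun ω i => s i ω with hg
  have hgmeas : Measurable g := measurable_pi_lambda _ hsmeas
  have hmap : Measure.pi (fun _ : Fin (N+1) => μ) = Measure.map g ℙ := by
    apply Measure.pi_eq
    intro A hA
    rw [Measure.map_apply hgmeas (MeasurableSet.univ_pi hA)]
    have hpre : g ⁻¹' (Set.univ.pi A) = ⋂ i, s i ⁻¹' A i := by
      ext ω
      simp only [Set.mem_preimage, Set.mem_univ_pi, Set.mem_iInter]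
      exact Iff.rfl
    rw [hpre, hsindep.meas_iInter (fun i => ⟨A i, hA i, rfl⟩)]
    exact Finset.prod_congr rfl fun i _ => by
      rw [← Measure.map_apply (hsmeas i) (hA i), hident' i]
  set ν : Measure (Fin (N+1) → ℝ) := Measure.pi (fun _ : Fin (N+1) => μ) with hν
  have hνprob : IsProbabilityMeasure ν := by infer_instance
  -- the rank sets
  set c : Fin (N+1) → (Fin (N+1) → ℝ) → ℕ :=
    fun i v => (Finset.univ.filter fun j => v j < v i).card with hc
  set B : Fin (N+1) → Set (Fin (N+1) → ℝ) := fun i => {v | c i v < k} with hB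
  have hcmeas : ∀ i, Measurable (c i) := by
    intro i
    have : c i = fun v => ∑ j : Fin (N+1), if v j < v i then 1 else 0 := by
      funext v; simp only [hc]; rw [Finset.card_filter]
    rw [this]
    apply Finset.measurable_sum
    intro j _
    apply Measurable.ite
    · exact measurableSet_lt (measurable_pi_apply j) (measurable_pi_apply i)
    · exact measurable_const
    · exact measurable_const
  have hBmeas : ∀ i, MeasurableSet (B i) := by
    intro i
    have : B i = c i ⁻¹' (Set.Iio k) := rfl
    rw [this]
    exact (hcmeas i) measurableSet_Iio
  -- exchangeability: all B i have the same ν-measure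
  have hperm : ∀ i, ν (B i) = ν (B (Fin.last N)) := by
    intro i
    set e : Equiv.Perm (Fin (N+1)) := Equiv.swap (Fin.last N) i with he
    have hmp : MeasurePreserving (⇑(MeasurableEquiv.piCongrLeft (fun _ : Fin (N+1) => ℝ) e))
        ν ν := measurePreserving_piCongrLeft (fun _ => μ) e
    have hpre : (⇑(MeasurableEquiv.piCongrLeft (fun _ : Fin (N+1) => ℝ) e)) ⁻¹' (B (Fin.last N))
        = B i := by
      ext v
      have happ : ∀ j, (MeasurableEquiv.piCongrLeft (fun _ : Fin (N+1) => ℝ) e) v (e j) = v j :=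
        fun j => MeasurableEquiv.piCongrLeft_apply_apply (β := fun _ => ℝ) e v j
      have happ' : ∀ j, (MeasurableEquiv.piCongrLeft (fun _ : Fin (N+1) => ℝ) e) v j
          = v (e.symm j) := by
        intro j
        conv_lhs => rw [← Equiv.apply_symm_apply e j]
        rw [happ]
      simp only [hB, Set.mem_preimage, Set.mem_setOf_eq, hc]
      have hcnt : (Finset.univ.filter fun j =>
            (MeasurableEquiv.piCongrLeft (fun _ : Fin (N+1) => ℝ) e) v j
            < (MeasurableEquiv.piCongrLeft (fun _ : Fin (N+1) => ℝ) e) v (Fin.last N)).card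
          = (Finset.univ.filter fun j => v j < v i).card := by
        have h1 : ∀ j, ((MeasurableEquiv.piCongrLeft (fun _ : Fin (N+1) => ℝ) e) v j
            < (MeasurableEquiv.piCongrLeft (fun _ : Fin (N+1) => ℝ) e) v (Fin.last N))
            ↔ v (e.symm j) < v i := by
          intro j
          rw [happ' j, happ' (Fin.last N)]
          have : e.symm (Fin.last N) = i := by
            rw [he, Equiv.symm_swap, Equiv.swap_apply_left]
          rw [this]
        rw [Finset.filter_congr (fun j _ => by rw [h1 j])]
        exact aux_card_filter_comp_equiv e.symm (fun j => v j < v i)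
      rw [hcnt]
    rw [← hpre, hmp.measure_preimage (hBmeas _).nullMeasurableSet]
  -- pointwise: at least k of the B i hold
  have hcount : ∀ v : Fin (N+1) → ℝ, (k : ℝ≥0∞) ≤ ∑ i : Fin (N+1), (B i).indicator 1 v := by
    intro v
    have hsum : ∑ i : Fin (N+1), (B i).indicator (1 : (Fin (N+1) → ℝ) → ℝ≥0∞) v
        = ((Finset.univ.filter fun i => v ∈ B i).card : ℝ≥0∞) := by
      rw [Finset.card_filter]
      push_cast
      apply Finset.sum_congr rfl
      intro i _
      by_cases h : v ∈ B i <;> simp [h]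
    rw [hsum]
    have hkcard : k ≤ (Finset.univ.filter fun i => v ∈ B i).card := by
      have hsub : (Finset.univ.filter fun i => v i ≤ kthSmallest v k)
          ⊆ (Finset.univ.filter fun i => v ∈ B i) := by
        intro i hi
        rw [Finset.mem_filter] at hi ⊢
        refine ⟨Finset.mem_univ _, ?_⟩
        simp only [hB, Set.mem_setOf_eq, hc]
        calc (Finset.univ.filter fun j => v j < v i).card
            ≤ (Finset.univ.filter fun j => v j < kthSmallest v k).card := by
              apply Finset.card_le_card
              intro j hj
              rw [Finset.mem_filter] at hj ⊢
              exact ⟨hj.1, lt_of_lt_of_le hj.2 hi.2⟩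
          _ < k := aux_count_lt_kthSmallest hk1 (by omega) v
      calc k ≤ (Finset.univ.filter fun i => v i ≤ kthSmallest v k).card :=
            aux_count_le_kthSmallest hk1 (by omega) v
        _ ≤ _ := Finset.card_le_card hsub
    exact_mod_cast hkcard
  -- hence ν (B last) ≥ k / (N+1)
  have hsummeas : ∑ i : Fin (N+1), ν (B i) = (N+1 : ℝ≥0∞) * ν (B (Fin.last N)) := by
    rw [Finset.sum_congr rfl (fun i _ => hperm i)]
    simp [Finset.card_univ, mul_comm]
  have hklesum : (k : ℝ≥0∞) ≤ ∑ i : Fin (N+1), ν (B i) := by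
    have h1 : ∀ i : Fin (N+1), ν (B i) = ∫⁻ v, (B i).indicator 1 v ∂ν := by
      intro i
      rw [lintegral_indicator_one (hBmeas i)]
    calc (k : ℝ≥0∞) = ∫⁻ _, (k : ℝ≥0∞) ∂ν := by
          rw [lintegral_const, measure_univ, mul_one]
      _ ≤ ∫⁻ v, ∑ i : Fin (N+1), (B i).indicator 1 v ∂ν := lintegral_mono hcount
      _ = ∑ i : Fin (N+1), ∫⁻ v, (B i).indicator 1 v ∂ν := by
          rw [lintegral_finset_sum]
          intro i _
          exact measurable_one.indicator (hBmeas i)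
      _ = ∑ i : Fin (N+1), ν (B i) := by
          exact Finset.sum_congr rfl fun i _ => (h1 i).symm
  have hmain : (k : ℝ≥0∞) / ((N:ℝ≥0∞)+1) ≤ ν (B (Fin.last N)) := by
    rw [ENNReal.div_le_iff (by simp) (by simp)]
    rw [hsummeas] at hklesum
    calc (k:ℝ≥0∞) ≤ ((N:ℝ≥0∞)+1) * ν (B (Fin.last N)) := hklesum
      _ = ν (B (Fin.last N)) * ((N:ℝ≥0∞)+1) := mul_comm _ _
  -- identify ℙ of the preimage
  have hprob : ν (B (Fin.last N)) = ℙ (g ⁻¹' (B (Fin.last N))) := by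
    rw [hmap, Measure.map_apply hgmeas (hBmeas _)]
  -- the preimage is contained in the coverage event
  have hsub : g ⁻¹' (B (Fin.last N)) ⊆ {ω | ∀ t : Fin T, y (Fin.last N) ω t ∈ C t ω} := by
    intro ω hω
    simp only [Set.mem_preimage, hB, Set.mem_setOf_eq, hc, hg] at hω
    have hcnt : (Finset.univ.filter fun j : Fin N =>
        s j.castSucc ω < s (Fin.last N) ω).card < k := by
      calc (Finset.univ.filter fun j : Fin N => s j.castSucc ω < s (Fin.last N) ω).card
          ≤ (Finset.univ.filter fun j : Fin (N+1) => s j ω < s (Fin.last N) ω).card := by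
            apply Finset.card_le_card_of_injOn (fun j => j.castSucc)
            · intro j hj
              rw [Finset.mem_coe, Finset.mem_filter] at hj ⊢
              exact ⟨Finset.mem_univ _, hj.2⟩
            · intro a _ b _ hab
              exact Fin.castSucc_injective _ hab
        _ < k := hω
    have hle : s (Fin.last N) ω ≤ qhat ω := by
      rw [hq ω]
      exact aux_le_kthSmallest_of_count_lt hk1 hkN _ _ hcnt
    intro t
    rw [hC t ω]
    simp only [Set.mem_setOf_eq, ge_iff_le]
    have h2 : Finset.univ.inf' ⟨⟨0, hT⟩, Finset.mem_univ _⟩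
        (fun t => f (x (Fin.last N) ω t) (y (Fin.last N) ω t))
        ≤ f (x (Fin.last N) ω t) (y (Fin.last N) ω t) :=
      Finset.inf'_le _ (Finset.mem_univ t)
    have h3 := hs (Fin.last N) ω
    linarith
  -- final chain
  have hfinal : ENNReal.ofReal (1 - ε) ≤ (k : ℝ≥0∞) / ((N:ℝ≥0∞)+1) := by
    have hband : ((N:ℝ)+1) * (1-ε) ≤ (k:ℝ) := by rw [hk]; exact Nat.le_ceil _
    rw [ENNReal.le_div_iff_mul_le (Or.inl (by simp)) (Or.inl (by simp))]
    have hN1 : ((N:ℝ≥0∞)+1) = ENNReal.ofReal ((N:ℝ)+1) := by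
      rw [ENNReal.ofReal_add (by positivity) zero_le_one, ENNReal.ofReal_natCast,
        ENNReal.ofReal_one]
    rw [hN1, ← ENNReal.ofReal_mul (by linarith [hε.2] : (0:ℝ) ≤ 1-ε),
      ← ENNReal.ofReal_natCast k]
    apply ENNReal.ofReal_le_ofReal
    calc (1-ε) * ((N:ℝ)+1) = ((N:ℝ)+1) * (1-ε) := mul_comm _ _
      _ ≤ (k:ℝ) := hband
  calc ENNReal.ofReal (1 - ε) ≤ (k : ℝ≥0∞) / ((N:ℝ≥0∞)+1) := hfinal
    _ ≤ ν (B (Fin.last N)) := hmain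
    _ = ℙ (g ⁻¹' (B (Fin.last N))) := hprob
    _ ≤ ℙ {ω | ∀ t : Fin T, y (Fin.last N) ω t ∈ C t ω} := measure_mono hsub
end

section
/- Let X be a measurable space, Y a finite nonempty label set, and T a positive integer. Let (x̄_1, Ā_1),…,(x̄_{N+1}, Ā_{N+1}) be i.i.d. random pairs where x̄_i = (x_i^0,…,x_i^{T−1}) ∈ X^T and Ā_i = (A_i^0,…,A_i^{T−1}) is a sequence of nonempty subsets of Y, and let f̂ : X → Y → ℝ be a measurable confidence function. Define the sequence-level nonconformity score s_i = 1 − min_{0 ≤ t < T} max_{y ∈ A_i^t} f̂(x_i^t)_y. Fix ε ∈ (0,1), set k = ⌈(N+1)(1−ε)⌉, assume k ≤ N, and let q̂ be the k-th smallest value of the multiset {s_1,…,s_N}. Define the step-level prediction sets C^t(x) = {y ∈ Y : f̂(x)_y ≥ 1 − q̂}. Then P(for all t with 0 ≤ t < T, C^t(x_{N+1}^t) ∩ A_{N+1}^t ≠ ∅) ≥ 1 − ε. -/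
open MeasureTheory ProbabilityTheory
open scoped ENNReal

private lemma le_getD_of_countP_le {l : List ℝ} (hl : l.Pairwise (· ≤ ·)) {idx : ℕ}
    (hidx : idx < l.length) {x : ℝ}
    (h : l.countP (fun a => decide (a < x)) ≤ idx) : x ≤ l.getD idx 0 := by
  by_contra hx
  push_neg at hx
  rw [List.getD_eq_getElem _ _ hidx] at hx
  have hall : ∀ a ∈ l.take (idx + 1), (fun a => decide (a < x)) a = true := by
    intro a ha
    rw [List.mem_take_iff_getElem] at ha
    obtain ⟨m, hm, rfl⟩ := ha
    have hm2 : m < l.length := lt_of_lt_of_le hm (min_le_right _ _)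
    have hmle : m ≤ idx := Nat.lt_succ_iff.mp (lt_of_lt_of_le hm (min_le_left _ _))
    have hle : l[m] ≤ l[idx] := by
      rcases lt_or_eq_of_le hmle with h' | h'
      · exact List.pairwise_iff_getElem.mp hl m idx hm2 hidx h'
      · subst h'; rfl
    simp only [List.getElem_take] at *
    exact decide_eq_true (lt_of_le_of_lt hle hx)
  have h2 : (l.take (idx + 1)).countP (fun a => decide (a < x)) = idx + 1 := by
    rw [List.countP_eq_length.mpr hall, List.length_take]
    omega
  have h3 : l.countP (fun a => decide (a < x)) =
      (l.take (idx + 1)).countP (fun a => decide (a < x)) +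
      (l.drop (idx + 1)).countP (fun a => decide (a < x)) := by
    conv_lhs => rw [← List.take_append_drop (idx + 1) l]
    rw [List.countP_append]
  omega

private lemma countP_ofFn_s7 {N : ℕ} (w : Fin N → ℝ) (x : ℝ) :
    (List.ofFn w).countP (fun a => decide (a < x)) =
      (Finset.univ.filter (fun j => w j < x)).card := by
  have h1 : ((List.ofFn w : List ℝ) : Multiset ℝ) = Finset.univ.val.map w :=
    (Fin.univ_val_map w).symm
  have h2 : (List.ofFn w).countP (fun a => decide (a < x)) =
      Multiset.countP (fun a => a < x) ((List.ofFn w : List ℝ) : Multiset ℝ) :=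
    (Multiset.coe_countP _ _).symm
  rw [h2, h1, Multiset.countP_map]
  rfl

private lemma le_kthSmallest_of_count_le {N : ℕ} (v : Fin N → ℝ) (x : ℝ) (k : ℕ)
    (hk1 : 1 ≤ k) (hkN : k ≤ N)
    (hcount : (Finset.univ.filter (fun j => v j < x)).card ≤ k - 1) :
    x ≤ kthSmallest v k := by
  have hsorted : ((List.ofFn v : Multiset ℝ).sort (· ≤ ·)).Pairwise (· ≤ ·) :=
    Multiset.pairwise_sort _ _
  have hlen : ((List.ofFn v : Multiset ℝ).sort (· ≤ ·)).length = N := by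
    rw [Multiset.length_sort]; simp
  have hperm : ((List.ofFn v : Multiset ℝ).sort (· ≤ ·)).Perm (List.ofFn v) :=
    Multiset.coe_eq_coe.mp (by rw [Multiset.sort_eq])
  have hcnt : ((List.ofFn v : Multiset ℝ).sort (· ≤ ·)).countP (fun a => decide (a < x))
      = (List.ofFn v).countP (fun a => decide (a < x)) := hperm.countP_eq _
  exact le_getD_of_countP_le hsorted (by omega) (by rw [hcnt, countP_ofFn_s7]; omega)

private lemma card_good_ge {n : ℕ} (v : Fin n → ℝ) (k : ℕ) (hk : k ≤ n) :
    k ≤ (Finset.univ.filter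
      (fun i => (Finset.univ.filter (fun j => v j < v i)).card + 1 ≤ k)).card := by
  classical
  set σ := Tuple.sort v with hσ
  have hmono := Tuple.monotone_sort v
  set T := Finset.univ.filter fun p : Fin n => (p : ℕ) < k with hT
  have hTcard : T.card = k := by
    have : T = (Finset.range k).attachFin
        (fun m hm => lt_of_lt_of_le (Finset.mem_range.mp hm) hk) := by
      ext p; simp [hT, Finset.mem_attachFin]
    rw [this, Finset.card_attachFin, Finset.card_range]
  rw [← hTcard]
  apply Finset.card_le_card_of_injOn σ
  · intro p hp
    rw [Finset.mem_coe, Finset.mem_filter] at hp ⊢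
    refine ⟨Finset.mem_univ _, ?_⟩
    have hcard1 : (Finset.univ.filter (fun j => v j < v (σ p))).card
        = (Finset.univ.filter (fun q => v (σ q) < v (σ p))).card := by
      apply Finset.card_equiv σ.symm
      intro q
      simp only [Finset.mem_filter, Finset.mem_univ, true_and]
      rw [Equiv.apply_symm_apply]
    have hsub : (Finset.univ.filter (fun q => v (σ q) < v (σ p)))
        ⊆ Finset.univ.filter (fun q => q < p) := by
      intro q hq
      rw [Finset.mem_filter] at hq ⊢
      refine ⟨Finset.mem_univ _, ?_⟩
      by_contra hqp
      push_neg at hqp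
      exact absurd (hmono hqp) (not_le.mpr hq.2)
    have hcard2 : (Finset.univ.filter (fun q : Fin n => q < p)).card = (p : ℕ) := by
      have : (Finset.univ.filter (fun q : Fin n => q < p)) = Finset.Iio p := by
        ext q; simp
      rw [this, Fin.card_Iio]
    have hle := Finset.card_le_card hsub
    rw [hcard2] at hle
    rw [hcard1]
    have hpk : (p : ℕ) < k := hp.2
    omega
  · exact Set.injOn_of_injective σ.injective

private lemma map_joint_eq_pi {Ω : Type*} [MeasureSpace Ω] [IsProbabilityMeasure (ℙ : Measure Ω)]
    {n : ℕ} (g : Fin n → Ω → ℝ) (hg : ∀ i, Measurable (g i))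
    (ν : Measure ℝ) [IsProbabilityMeasure ν] (hν : ∀ i, (ℙ : Measure Ω).map (g i) = ν)
    (hprod : ∀ B : Fin n → Set ℝ, (∀ i, MeasurableSet (B i)) →
      ℙ (⋂ i, g i ⁻¹' B i) = ∏ i, ℙ (g i ⁻¹' B i)) :
    (ℙ : Measure Ω).map (fun ω i => g i ω) = Measure.pi (fun _ => ν) := by
  refine (Measure.pi_eq (μ := fun _ : Fin n => ν) ?_).symm
  intro B hB
  rw [Measure.map_apply (measurable_pi_lambda _ hg) (MeasurableSet.univ_pi hB)]
  have hpre : (fun ω i => g i ω) ⁻¹' Set.pi Set.univ B = ⋂ i, g i ⁻¹' B i := by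
    ext ω; simp [Set.mem_pi]
  rw [hpre, hprod B hB]
  exact Finset.prod_congr rfl fun i _ => by
    rw [← hν i, Measure.map_apply (hg i) (hB i)]

private lemma measurable_finset_inf' {ι δ : Type*} [MeasurableSpace δ] {s : Finset ι}
    (hs : s.Nonempty) {f : ι → δ → ℝ} (hf : ∀ i ∈ s, Measurable (f i)) :
    Measurable fun a => s.inf' hs fun i => f i a := by
  have h : Measurable (s.inf' hs f) :=
    Finset.inf'_induction hs _ (fun _f hf' _g hg => hf'.inf hg) hf
  have he : (fun a => s.inf' hs fun i => f i a) = s.inf' hs f := by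
    funext a; rw [Finset.inf'_apply]
  rwa [he]

private lemma measurable_finset_sup' {ι δ : Type*} [MeasurableSpace δ] {s : Finset ι}
    (hs : s.Nonempty) {f : ι → δ → ℝ} (hf : ∀ i ∈ s, Measurable (f i)) :
    Measurable fun a => s.sup' hs fun i => f i a := by
  have h : Measurable (s.sup' hs f) :=
    Finset.sup'_induction hs _ (fun _f hf' _g hg => hf'.sup hg) hf
  have he : (fun a => s.sup' hs fun i => f i a) = s.sup' hs f := by
    funext a; rw [Finset.sup'_apply]
  rwa [he]

/-- **Multi-step conformal prediction with multiple acceptable options.**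
Given i.i.d. pairs `(x̄ᵢ, Āᵢ)` of context sequences and sequences of nonempty acceptable-label
sets, sequence-level nonconformity scores `sᵢ = 1 - min_t max_{y ∈ Aᵢᵗ} f̂(xᵢᵗ)_y`,
`k = ⌈(N+1)(1-ε)⌉ ≤ N`, and `q̂` the k-th smallest calibration score, the causally constructed
step-level prediction sets `Cᵗ(x) = {y | f̂(x)_y ≥ 1 - q̂}` intersect every acceptable set of
the test sequence with probability at least `1 - ε`. -/
theorem multi_step_multiple_acceptable_options_coverage
    {Ω : Type*} [MeasureSpace Ω] [IsProbabilityMeasure (ℙ : Measure Ω)]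
    {𝒳 : Type*} [MeasurableSpace 𝒳]
    {𝒴 : Type*} [Fintype 𝒴] [Nonempty 𝒴] [MeasurableSpace 𝒴] [MeasurableSingletonClass 𝒴]
    [MeasurableSpace (Finset 𝒴)] [MeasurableSingletonClass (Finset 𝒴)]
    (T : ℕ) (hT : 0 < T) (N : ℕ)
    (x : Fin (N + 1) → Ω → Fin T → 𝒳) (A : Fin (N + 1) → Ω → Fin T → Finset 𝒴)
    (hA : ∀ i ω t, (A i ω t).Nonempty)
    (hmeas : ∀ i, Measurable (fun ω => (x i ω, A i ω)))
    (hindep : iIndepFun (fun i ω => (x i ω, A i ω)) ℙ)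
    (hident : ∀ i j, IdentDistrib (fun ω => (x i ω, A i ω)) (fun ω => (x j ω, A j ω)) ℙ ℙ)
    (f : 𝒳 → 𝒴 → ℝ) (hf : ∀ y, Measurable (fun x' => f x' y))
    (ε : ℝ) (hε : ε ∈ Set.Ioo (0 : ℝ) 1)
    (k : ℕ) (hk : k = ⌈((N : ℝ) + 1) * (1 - ε)⌉₊) (hkN : k ≤ N)
    (s : Fin (N + 1) → Ω → ℝ)
    (hs : ∀ i ω, s i ω =
      1 - Finset.univ.inf' ⟨⟨0, hT⟩, Finset.mem_univ _⟩
            (fun t => (A i ω t).sup' (hA i ω t) (fun y => f (x i ω t) y)))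
    (qhat : Ω → ℝ) (hq : ∀ ω, qhat ω = kthSmallest (fun i : Fin N => s i.castSucc ω) k)
    (C : Fin T → Ω → Set 𝒴)
    (hC : ∀ t ω, C t ω = {y | f (x (Fin.last N) ω t) y ≥ 1 - qhat ω}) :
    ℙ {ω | ∀ t : Fin T, (C t ω ∩ ↑(A (Fin.last N) ω t)).Nonempty}
      ≥ ENNReal.ofReal (1 - ε) := by
  classical
  obtain ⟨hε0, hε1⟩ := hε
  -- the score function
  set G : (Fin T → 𝒳) × (Fin T → Finset 𝒴) → ℝ := fun p =>
    1 - Finset.univ.inf' ⟨⟨0, hT⟩, Finset.mem_univ _⟩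
        (fun t => if h : (p.2 t).Nonempty then (p.2 t).sup' h (fun y => f (p.1 t) y) else 0)
    with hG
  have hGmeas : Measurable G := by
    apply measurable_from_prod_countable_left
    intro Abar
    apply Measurable.const_sub
    apply measurable_finset_inf'
    intro t _
    by_cases h : (Abar t).Nonempty
    · simp only [dif_pos h]
      exact measurable_finset_sup' h fun y _ => (hf y).comp (measurable_pi_apply t)
    · simp only [dif_neg h]; exact measurable_const
  have hsg : ∀ i, s i = fun ω => G (x i ω, A i ω) := by
    intro i; funext ω
    rw [hs]
    simp only [hG]
    have harg : (fun t => if h : (A i ω t).Nonempty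
        then (A i ω t).sup' h (fun y => f (x i ω t) y) else 0)
        = fun t => (A i ω t).sup' (hA i ω t) (fun y => f (x i ω t) y) := by
      funext t; rw [dif_pos (hA i ω t)]
    rw [harg]
  have hsmeas : ∀ i, Measurable (s i) := fun i => by
    rw [hsg i]; exact hGmeas.comp (hmeas i)
  set ν : Measure ℝ := (ℙ : Measure Ω).map (s 0) with hν
  haveI : IsProbabilityMeasure ν := by
    rw [hν]; exact Measure.isProbabilityMeasure_map (hsmeas 0).aemeasurable
  have hsident : ∀ i, (ℙ : Measure Ω).map (s i) = ν := by
    intro i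
    rw [hν, hsg i, hsg 0]
    exact ((hident i 0).comp hGmeas).map_eq
  have hindep' : iIndepFun s ℙ := by
    have h := hindep.comp (fun _ => G) (fun _ => hGmeas)
    have : s = fun i => G ∘ (fun ω => (x i ω, A i ω)) := funext fun i => hsg i
    rwa [this]
  have hsprod : ∀ B : Fin (N + 1) → Set ℝ, (∀ i, MeasurableSet (B i)) →
      ℙ (⋂ i, s i ⁻¹' B i) = ∏ i, ℙ (s i ⁻¹' B i) := by
    intro B hB
    have h := hindep'.measure_inter_preimage_eq_mul Finset.univ (sets := B) (fun i _ => hB i)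
    simpa using h
  -- the rank events
  set Bset : Fin (N + 1) → Set (Fin (N + 1) → ℝ) := fun i =>
    {v | (Finset.univ.filter fun j => v j < v i).card + 1 ≤ k} with hBset
  have hBmeas : ∀ i, MeasurableSet (Bset i) := by
    intro i
    have hcnt : Measurable fun v : Fin (N + 1) → ℝ =>
        (Finset.univ.filter fun j => v j < v i).card := by
      have he : (fun v : Fin (N + 1) → ℝ => (Finset.univ.filter fun j => v j < v i).card)
          = fun v => ∑ j, if v j < v i then 1 else 0 := by
        funext v; rw [Finset.card_filter]
      rw [he]
      refine Finset.measurable_sum _ fun j _ => Measurable.ite ?_ measurable_const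
        measurable_const
      exact measurableSet_lt (measurable_pi_apply j) (measurable_pi_apply i)
    exact hcnt (MeasurableSet.of_discrete (s := {m : ℕ | m + 1 ≤ k}))
  set Smap : Ω → Fin (N + 1) → ℝ := fun ω i => s i ω with hSmap
  have hSmapmeas : Measurable Smap := measurable_pi_lambda _ hsmeas
  have hjoint : (ℙ : Measure Ω).map Smap = Measure.pi (fun _ => ν) :=
    map_joint_eq_pi s hsmeas ν hsident hsprod
  -- exchangeability: all rank events have the same probability
  have hprob_eq : ∀ i₀, ℙ (Smap ⁻¹' Bset i₀) = ℙ (Smap ⁻¹' Bset (Fin.last N)) := by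
    intro i₀
    set e := Equiv.swap i₀ (Fin.last N) with he
    have hprod' : ∀ B : Fin (N + 1) → Set ℝ, (∀ i, MeasurableSet (B i)) →
        ℙ (⋂ i, s (e i) ⁻¹' B i) = ∏ i, ℙ (s (e i) ⁻¹' B i) := by
      intro B hB
      have h1 : (⋂ i, s (e i) ⁻¹' B i) = ⋂ j, s j ⁻¹' B (e.symm j) := by
        ext ω
        simp only [Set.mem_iInter]
        constructor
        · intro h j
          have := h (e.symm j)
          simpa using this
        · intro h i
          have := h (e i)
          simpa using this
      have h2 : ∏ i, ℙ (s (e i) ⁻¹' B i) = ∏ j, ℙ (s j ⁻¹' B (e.symm j)) := by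
        rw [← Equiv.prod_comp e (fun j => ℙ (s j ⁻¹' B (e.symm j)))]
        exact Finset.prod_congr rfl fun i _ => by rw [Equiv.symm_apply_apply]
      rw [h1, h2]
      exact hsprod _ (fun j => hB (e.symm j))
    have hjoint' : (ℙ : Measure Ω).map (fun ω j => s (e j) ω) = Measure.pi (fun _ => ν) :=
      map_joint_eq_pi (fun j => s (e j)) (fun j => hsmeas _) ν (fun j => hsident _) hprod'
    have hS'meas : Measurable (fun ω (j : Fin (N + 1)) => s (e j) ω) :=
      measurable_pi_lambda _ fun j => hsmeas _
    have hpre : Smap ⁻¹' Bset i₀ = (fun ω j => s (e j) ω) ⁻¹' Bset (Fin.last N) := by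
      ext ω
      simp only [Set.mem_preimage, hBset, Set.mem_setOf_eq, hSmap]
      have hlast : e (Fin.last N) = i₀ := Equiv.swap_apply_right _ _
      have hcard : (Finset.univ.filter fun j => s j ω < s i₀ ω).card
          = (Finset.univ.filter fun j => s (e j) ω < s (e (Fin.last N)) ω).card := by
        rw [hlast]
        apply Finset.card_equiv e.symm
        intro q
        simp only [Finset.mem_filter, Finset.mem_univ, true_and]
        rw [Equiv.apply_symm_apply]
      rw [hcard]
    rw [hpre, ← Measure.map_apply hS'meas (hBmeas (Fin.last N)), hjoint', ← hjoint,
      Measure.map_apply hSmapmeas (hBmeas (Fin.last N))]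
  -- the sum of the probabilities is at least k
  have hEvmeas : ∀ i, MeasurableSet (Smap ⁻¹' Bset i) := fun i => hSmapmeas (hBmeas i)
  have hpt : ∀ ω, (k : ℝ≥0∞) ≤ ∑ i : Fin (N + 1),
      (Smap ⁻¹' Bset i).indicator (fun _ => (1 : ℝ≥0∞)) ω := by
    intro ω
    have hc := card_good_ge (fun i => s i ω) k (le_trans hkN (Nat.le_succ N))
    have hsum : ∑ i : Fin (N + 1), (Smap ⁻¹' Bset i).indicator (fun _ => (1 : ℝ≥0∞)) ω
        = ((Finset.univ.filter fun i : Fin (N + 1) =>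
            (Finset.univ.filter fun j => s j ω < s i ω).card + 1 ≤ k).card : ℝ≥0∞) := by
      rw [Finset.card_filter]
      push_cast
      refine Finset.sum_congr rfl fun i _ => ?_
      by_cases h : (Finset.univ.filter fun j => s j ω < s i ω).card + 1 ≤ k
      · rw [if_pos h, Set.indicator_of_mem]
        simp only [Set.mem_preimage, hBset, Set.mem_setOf_eq, hSmap]
        exact h
      · rw [if_neg h, Set.indicator_of_notMem]
        simp only [Set.mem_preimage, hBset, Set.mem_setOf_eq, hSmap]
        exact h
    rw [hsum]
    exact_mod_cast hc
  have hsum_ge : (k : ℝ≥0∞) ≤ ∑ i : Fin (N + 1), ℙ (Smap ⁻¹' Bset i) := by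
    have h1 : (k : ℝ≥0∞) = ∫⁻ _, (k : ℝ≥0∞) ∂(ℙ : Measure Ω) := by
      rw [lintegral_const, measure_univ, mul_one]
    rw [h1]
    calc ∫⁻ _, (k : ℝ≥0∞) ∂(ℙ : Measure Ω)
        ≤ ∫⁻ ω, ∑ i : Fin (N + 1),
            (Smap ⁻¹' Bset i).indicator (fun _ => (1 : ℝ≥0∞)) ω ∂ℙ := lintegral_mono hpt
      _ = ∑ i : Fin (N + 1), ∫⁻ ω,
            (Smap ⁻¹' Bset i).indicator (fun _ => (1 : ℝ≥0∞)) ω ∂ℙ :=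
          lintegral_finset_sum _ fun i _ => measurable_const.indicator (hEvmeas i)
      _ = ∑ i : Fin (N + 1), ℙ (Smap ⁻¹' Bset i) := by
          refine Finset.sum_congr rfl fun i _ => ?_
          exact lintegral_indicator_one (hEvmeas i)
  -- hence the last event has probability at least k/(N+1)
  have hconst : ∑ i : Fin (N + 1), ℙ (Smap ⁻¹' Bset i)
      = (N + 1 : ℝ≥0∞) * ℙ (Smap ⁻¹' Bset (Fin.last N)) := by
    rw [Finset.sum_congr rfl fun i _ => hprob_eq i, Finset.sum_const, Finset.card_univ,
      Fintype.card_fin, nsmul_eq_mul]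
    push_cast
    ring
  have hPge : ENNReal.ofReal (1 - ε) ≤ ℙ (Smap ⁻¹' Bset (Fin.last N)) := by
    have hkP : (k : ℝ≥0∞) ≤ ℙ (Smap ⁻¹' Bset (Fin.last N)) * (N + 1 : ℝ≥0∞) := by
      rw [mul_comm]
      exact hsum_ge.trans_eq hconst
    have hdiv : (k : ℝ≥0∞) / (N + 1 : ℝ≥0∞) ≤ ℙ (Smap ⁻¹' Bset (Fin.last N)) :=
      ENNReal.div_le_of_le_mul hkP
    refine le_trans ?_ hdiv
    have hr : (1 - ε) ≤ (k : ℝ) / ((N : ℝ) + 1) := by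
      rw [le_div_iff₀ (by positivity)]
      calc (1 - ε) * ((N : ℝ) + 1) = ((N : ℝ) + 1) * (1 - ε) := by ring
        _ ≤ (k : ℝ) := by rw [hk]; exact Nat.le_ceil _
    calc ENNReal.ofReal (1 - ε) ≤ ENNReal.ofReal ((k : ℝ) / ((N : ℝ) + 1)) :=
          ENNReal.ofReal_le_ofReal hr
      _ = (k : ℝ≥0∞) / (N + 1 : ℝ≥0∞) := by
          rw [ENNReal.ofReal_div_of_pos (by positivity)]
          congr 1
          · exact ENNReal.ofReal_natCast k
          · rw [show ((N : ℝ) + 1) = ((N + 1 : ℕ) : ℝ) by push_cast; ring,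
              ENNReal.ofReal_natCast]
            push_cast
            ring
  -- k ≥ 1
  have hk1 : 1 ≤ k := by
    rw [hk]
    exact Nat.ceil_pos.mpr (mul_pos (by positivity) (by linarith))
  -- the rank event implies coverage
  have hsubset : Smap ⁻¹' Bset (Fin.last N)
      ⊆ {ω | ∀ t : Fin T, (C t ω ∩ ↑(A (Fin.last N) ω t)).Nonempty} := by
    intro ω hω
    simp only [Set.mem_preimage, hBset, Set.mem_setOf_eq, hSmap] at hω
    have hle : (Finset.univ.filter fun j : Fin N => s j.castSucc ω < s (Fin.last N) ω).card
        ≤ (Finset.univ.filter fun j : Fin (N + 1) => s j ω < s (Fin.last N) ω).card := by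
      apply Finset.card_le_card_of_injOn Fin.castSucc
      · intro j hj
        rw [Finset.mem_coe, Finset.mem_filter] at hj ⊢
        exact ⟨Finset.mem_univ _, hj.2⟩
      · exact Set.injOn_of_injective (Fin.castSucc_injective N)
    have hqle : s (Fin.last N) ω ≤ qhat ω := by
      rw [hq]
      exact le_kthSmallest_of_count_le _ _ k hk1 hkN (by omega)
    intro t
    have hinf : 1 - qhat ω ≤ Finset.univ.inf' ⟨⟨0, hT⟩, Finset.mem_univ _⟩
        (fun t => (A (Fin.last N) ω t).sup' (hA (Fin.last N) ω t)
          (fun y => f (x (Fin.last N) ω t) y)) := by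
      have := hs (Fin.last N) ω
      linarith
    have hsup : 1 - qhat ω ≤ (A (Fin.last N) ω t).sup' (hA (Fin.last N) ω t)
        (fun y => f (x (Fin.last N) ω t) y) :=
      le_trans hinf (Finset.inf'_le _ (Finset.mem_univ t))
    obtain ⟨y, hy, hyeq⟩ := Finset.exists_mem_eq_sup' (hA (Fin.last N) ω t)
      (fun y => f (x (Fin.last N) ω t) y)
    refine ⟨y, ?_, hy⟩
    rw [hC]
    simp only [Set.mem_setOf_eq, ge_iff_le]
    rw [hyeq] at hsup
    exact hsup
  exact le_trans hPge (measure_mono hsubset)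
end

section
/- Let X be a measurable space, Y a finite nonempty label set, and μ a probability measure on X × Y with marginal μ_X on X. Let f : X → Y → ℝ be measurable with f(x)_y ≥ 0 such that f is a conditional probability of the label given the input: for every y ∈ Y and every measurable B ⊆ X, μ(B × {y}) = ∫_B f(x)_y dμ_X(x). Fix a threshold τ > 0 and define C_τ(x) = {y ∈ Y : f(x)_y ≥ τ}. Then for every set-valued predictor C' : X → (subsets of Y) such that {x : y ∈ C'(x)} is measurable for each y ∈ Y, if the coverage of C' is at least that of C_τ, i.e., μ({(x,y) : y ∈ C'(x)}) ≥ μ({(x,y) : y ∈ C_τ(x)}), then the average set size of C' is at least that of C_τ: ∫ |C'(x)| dμ_X(x) ≥ ∫ |C_τ(x)| dμ_X(x). -/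
open MeasureTheory

lemma aux_integrable
    {𝒳 : Type*} [MeasurableSpace 𝒳] (μX : Measure 𝒳) [IsFiniteMeasure μX]
    (g : 𝒳 → ℝ) (hg : Measurable g) (hg0 : ∀ x, 0 ≤ g x)
    (hbdd : ∀ B : Set 𝒳, MeasurableSet B → ∫ x in B, g x ∂μX ≤ 1) :
    Integrable g μX := by
  refine ⟨hg.aestronglyMeasurable, ?_⟩
  rw [hasFiniteIntegral_iff_ofReal (Filter.Eventually.of_forall hg0)]
  set B : ℕ → Set 𝒳 := fun n => {x | g x ≤ n} with hB
  have hBm : ∀ n, MeasurableSet (B n) := fun n => measurableSet_le hg measurable_const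
  have hint : ∀ n, IntegrableOn g (B n) μX := by
    intro n
    refine Integrable.mono' (integrable_const (n : ℝ)) hg.aestronglyMeasurable.restrict ?_
    refine (ae_restrict_iff' (hBm n)).2 (Filter.Eventually.of_forall ?_)
    intro x hx
    rw [Real.norm_eq_abs, abs_of_nonneg (hg0 x)]
    exact hx
  have key : ∀ n, ∫⁻ x in B n, ENNReal.ofReal (g x) ∂μX ≤ 1 := by
    intro n
    rw [← ofReal_integral_eq_lintegral_ofReal (hint n)
      (Filter.Eventually.of_forall hg0)]
    calc ENNReal.ofReal (∫ x in B n, g x ∂μX) ≤ ENNReal.ofReal 1 :=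
          ENNReal.ofReal_le_ofReal (hbdd _ (hBm n))
      _ = 1 := ENNReal.ofReal_one
  have hBsub : ∀ {m n : ℕ}, m ≤ n → B m ⊆ B n := by
    intro m n hmn x hx
    simp only [B, Set.mem_setOf_eq] at hx ⊢
    exact le_trans hx (Nat.cast_le.2 hmn)
  have hmono : ∀ m n : ℕ, m ≤ n → ∀ x,
      (B m).indicator (fun x => ENNReal.ofReal (g x)) x ≤
      (B n).indicator (fun x => ENNReal.ofReal (g x)) x := fun m n h x =>
    Set.indicator_le_indicator_of_subset (hBsub h) (fun _ => zero_le) x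
  have hsup : ∀ x, (⨆ n, (B n).indicator (fun x => ENNReal.ofReal (g x)) x)
      = ENNReal.ofReal (g x) := by
    intro x
    refine le_antisymm (iSup_le fun n => Set.indicator_apply_le fun _ => le_rfl) ?_
    have hx : x ∈ B ⌈g x⌉₊ := by
      simp only [hB, Set.mem_setOf_eq]
      exact Nat.le_ceil _
    calc ENNReal.ofReal (g x)
        = (B ⌈g x⌉₊).indicator (fun x => ENNReal.ofReal (g x)) x := by
          rw [Set.indicator_of_mem hx]
      _ ≤ _ := le_iSup (fun n => (B n).indicator (fun x => ENNReal.ofReal (g x)) x) ⌈g x⌉₊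
  calc ∫⁻ x, ENNReal.ofReal (g x) ∂μX
      = ∫⁻ x, ⨆ n, (B n).indicator (fun x => ENNReal.ofReal (g x)) x ∂μX := by
        simp_rw [hsup]
    _ = ⨆ n, ∫⁻ x, (B n).indicator (fun x => ENNReal.ofReal (g x)) x ∂μX := by
        exact lintegral_iSup (fun n => (hg.ennreal_ofReal).indicator (hBm n))
          (fun m n h x => hmono m n h x)
    _ ≤ 1 := by
        refine iSup_le fun n => ?_
        simp only [lintegral_indicator (hBm n)]
        exact key n
    _ < ⊤ := ENNReal.one_lt_top

lemma aux_cov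
    {𝒳 : Type*} [MeasurableSpace 𝒳]
    {𝒴 : Type*} [Fintype 𝒴] [MeasurableSpace 𝒴] [MeasurableSingletonClass 𝒴]
    (μ : Measure (𝒳 × 𝒴)) [IsProbabilityMeasure μ]
    (C : 𝒳 → Set 𝒴) (hC : ∀ y, MeasurableSet {x | y ∈ C x}) :
    (μ {p : 𝒳 × 𝒴 | p.2 ∈ C p.1}).toReal
      = ∑ y : 𝒴, (μ ({x | y ∈ C x} ×ˢ ({y} : Set 𝒴))).toReal := by
  have hS : {p : 𝒳 × 𝒴 | p.2 ∈ C p.1} = ⋃ y : 𝒴, ({x | y ∈ C x} ×ˢ ({y} : Set 𝒴)) := by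
    ext ⟨x, y⟩
    simp only [Set.mem_setOf_eq, Set.mem_iUnion, Set.mem_prod, Set.mem_singleton_iff]
    constructor
    · intro h; exact ⟨y, h, rfl⟩
    · rintro ⟨y', hy', rfl⟩; exact hy'
  have hdisj : Pairwise (Function.onFun Disjoint
      fun y : 𝒴 => ({x | y ∈ C x} ×ˢ ({y} : Set 𝒴))) := by
    intro y y' hyy'
    refine Set.disjoint_left.2 ?_
    rintro ⟨x, z⟩ ⟨-, hz⟩ ⟨-, hz'⟩
    exact hyy' (hz.symm.trans hz')
  rw [hS, measure_iUnion hdisj (fun y => (hC y).prod (measurableSet_singleton y)),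
    tsum_fintype, ENNReal.toReal_sum (fun y _ => measure_ne_top μ _)]

lemma aux_size
    {𝒳 : Type*} [MeasurableSpace 𝒳]
    {𝒴 : Type*} [Fintype 𝒴] [MeasurableSpace 𝒴]
    (μX : Measure 𝒳) [IsFiniteMeasure μX]
    (C : 𝒳 → Set 𝒴) (hC : ∀ y, MeasurableSet {x | y ∈ C x}) :
    ∫ x, ((C x).ncard : ℝ) ∂μX = ∑ y : 𝒴, (μX {x | y ∈ C x}).toReal := by
  classical
  have hcard : ∀ x, ((C x).ncard : ℝ)
      = ∑ y : 𝒴, ({x | y ∈ C x}).indicator (fun _ => (1 : ℝ)) x := by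
    intro x
    have h1 : C x = ↑(Finset.univ.filter (· ∈ C x)) := by ext y; simp
    rw [h1, Set.ncard_coe_finset]
    rw [← Finset.sum_boole]
    refine Finset.sum_congr rfl fun y _ => ?_
    simp [Set.indicator_apply]
  simp_rw [hcard]
  rw [integral_finset_sum _ (fun y _ => (integrable_const (1 : ℝ)).indicator (hC y))]
  refine Finset.sum_congr rfl fun y _ => ?_
  rw [integral_indicator_const _ (hC y)]
  simp
  rfl

lemma aux_key
    {𝒳 : Type*} [MeasurableSpace 𝒳] (μX : Measure 𝒳) [IsFiniteMeasure μX]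
    (g : 𝒳 → ℝ) (hg : Measurable g) (hgint : Integrable g μX)
    (τ : ℝ) (A' : Set 𝒳) (hA' : MeasurableSet A') :
    ∫ x in A', g x ∂μX - τ * (μX A').toReal
      ≤ ∫ x in {x | τ ≤ g x}, g x ∂μX - τ * (μX {x | τ ≤ g x}).toReal := by
  set Aτ : Set 𝒳 := {x | τ ≤ g x} with hAτdef
  have hAτ : MeasurableSet Aτ := measurableSet_le measurable_const hg
  have hind : ∀ (A : Set 𝒳), MeasurableSet A →
      ∫ x, A.indicator (fun x => g x - τ) x ∂μX
        = ∫ x in A, g x ∂μX - τ * (μX A).toReal := by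
    intro A hA
    rw [integral_indicator hA,
      integral_sub hgint.integrableOn
        (integrableOn_const (measure_ne_top μX A)),
      setIntegral_const, smul_eq_mul, mul_comm]
    rfl
  have h0 : 0 ≤ ∫ x,
      (Aτ.indicator (fun x => g x - τ) x - A'.indicator (fun x => g x - τ) x) ∂μX := by
    refine integral_nonneg fun x => ?_
    simp only [Pi.zero_apply]
    by_cases hx : x ∈ Aτ
    · rw [Set.indicator_of_mem hx]
      by_cases hx' : x ∈ A'
      · rw [Set.indicator_of_mem hx']; simp
      · rw [Set.indicator_of_notMem hx']
        have hx2 : τ ≤ g x := hx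
        simp only [sub_zero, sub_nonneg]
        linarith
    · rw [Set.indicator_of_notMem hx]
      by_cases hx' : x ∈ A'
      · rw [Set.indicator_of_mem hx']
        have hx2 : g x < τ := lt_of_not_ge hx
        simp only [zero_sub, neg_nonneg, sub_nonpos]
        linarith
      · rw [Set.indicator_of_notMem hx']; simp
  have hI : Integrable (fun x => g x - τ) μX := hgint.sub (integrable_const τ)
  rw [integral_sub (hI.indicator hAτ) (hI.indicator hA'),
    hind Aτ hAτ, hind A' hA'] at h0
  linarith

/-- **Minimality of thresholding the true conditional probabilities (Sadinle et al., Thm. 1).**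
Let `μ` be a probability measure on `𝒳 × 𝒴` (`𝒴` finite nonempty) with marginal `μX`, and let
`f : 𝒳 → 𝒴 → ℝ` be a nonnegative measurable version of the conditional probability of the
label given the input, i.e. `μ(B × {y}) = ∫_B f(x)_y dμX(x)` for all `y` and measurable `B`.
For a threshold `τ > 0`, set `C_τ(x) = {y | f(x)_y ≥ τ}`. Then any set-valued predictor `C'`
with coverage at least that of `C_τ` has average set size at least that of `C_τ`. -/
theorem threshold_predictor_minimal_average_size
    {𝒳 : Type*} [MeasurableSpace 𝒳]
    {𝒴 : Type*} [Fintype 𝒴] [Nonempty 𝒴] [MeasurableSpace 𝒴] [MeasurableSingletonClass 𝒴]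
    (μ : Measure (𝒳 × 𝒴)) [IsProbabilityMeasure μ]
    (μX : Measure 𝒳) (hμX : μX = μ.map Prod.fst)
    (f : 𝒳 → 𝒴 → ℝ) (hfmeas : ∀ y, Measurable (fun x => f x y))
    (hfnonneg : ∀ x y, 0 ≤ f x y)
    (hcond : ∀ (y : 𝒴) (B : Set 𝒳), MeasurableSet B →
      (μ (B ×ˢ ({y} : Set 𝒴))).toReal = ∫ x in B, f x y ∂μX)
    (τ : ℝ) (hτ : 0 < τ)
    (C' : 𝒳 → Set 𝒴) (hC' : ∀ y, MeasurableSet {x | y ∈ C' x})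
    (hcov : μ {p : 𝒳 × 𝒴 | p.2 ∈ C' p.1} ≥ μ {p : 𝒳 × 𝒴 | τ ≤ f p.1 p.2}) :
    ∫ x, ((C' x).ncard : ℝ) ∂μX ≥ ∫ x, (({y : 𝒴 | τ ≤ f x y}).ncard : ℝ) ∂μX := by
  classical
  have hμXprob : IsProbabilityMeasure μX := by
    rw [hμX]; exact Measure.isProbabilityMeasure_map measurable_fst.aemeasurable
  have hCτ : ∀ y : 𝒴, MeasurableSet {x | τ ≤ f x y} := fun y =>
    measurableSet_le measurable_const (hfmeas y)
  -- integrability of each f(·, y)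
  have hfint : ∀ y : 𝒴, Integrable (fun x => f x y) μX := by
    intro y
    refine aux_integrable μX _ (hfmeas y) (fun x => hfnonneg x y) ?_
    intro B hB
    rw [← hcond y B hB]
    have h1 : μ (B ×ˢ ({y} : Set 𝒴)) ≤ 1 := prob_le_one
    calc (μ (B ×ˢ ({y} : Set 𝒴))).toReal ≤ (1 : ENNReal).toReal :=
          ENNReal.toReal_mono ENNReal.one_ne_top h1
      _ = 1 := by simp
  -- coverage identities
  have hcovC' : ∑ y : 𝒴, ∫ x in {x | y ∈ C' x}, f x y ∂μX
      = (μ {p : 𝒳 × 𝒴 | p.2 ∈ C' p.1}).toReal := by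
    rw [aux_cov μ C' hC']
    exact Finset.sum_congr rfl fun y _ => (hcond y _ (hC' y)).symm
  have hcovCτ : ∑ y : 𝒴, ∫ x in {x | τ ≤ f x y}, f x y ∂μX
      = (μ {p : 𝒳 × 𝒴 | τ ≤ f p.1 p.2}).toReal := by
    have h2 : (μ {p : 𝒳 × 𝒴 | p.2 ∈ (fun x => {y : 𝒴 | τ ≤ f x y}) p.1}).toReal
        = ∑ y : 𝒴, (μ ({x | y ∈ (fun x => {y : 𝒴 | τ ≤ f x y}) x} ×ˢ ({y} : Set 𝒴))).toReal :=
      aux_cov μ (fun x => {y : 𝒴 | τ ≤ f x y}) (fun y => hCτ y)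
    have h3 : {p : 𝒳 × 𝒴 | p.2 ∈ (fun x => {y : 𝒴 | τ ≤ f x y}) p.1}
        = {p : 𝒳 × 𝒴 | τ ≤ f p.1 p.2} := rfl
    rw [h3] at h2
    rw [h2]
    exact Finset.sum_congr rfl fun y _ => (hcond y _ (hCτ y)).symm
  -- per-label key inequality, summed
  have hkey : ∀ y : 𝒴,
      ∫ x in {x | y ∈ C' x}, f x y ∂μX - τ * (μX {x | y ∈ C' x}).toReal
        ≤ ∫ x in {x | τ ≤ f x y}, f x y ∂μX - τ * (μX {x | τ ≤ f x y}).toReal := fun y =>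
    aux_key μX (fun x => f x y) (hfmeas y) (hfint y) τ _ (hC' y)
  have hsum : ∑ y : 𝒴, (∫ x in {x | y ∈ C' x}, f x y ∂μX - τ * (μX {x | y ∈ C' x}).toReal)
      ≤ ∑ y : 𝒴, (∫ x in {x | τ ≤ f x y}, f x y ∂μX - τ * (μX {x | τ ≤ f x y}).toReal) :=
    Finset.sum_le_sum fun y _ => hkey y
  rw [Finset.sum_sub_distrib, Finset.sum_sub_distrib, ← Finset.mul_sum, ← Finset.mul_sum,
    hcovC', hcovCτ] at hsum
  have hle : (μ {p : 𝒳 × 𝒴 | τ ≤ f p.1 p.2}).toReal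
      ≤ (μ {p : 𝒳 × 𝒴 | p.2 ∈ C' p.1}).toReal :=
    ENNReal.toReal_mono (measure_ne_top μ _) hcov
  have hmm : τ * ∑ y : 𝒴, (μX {x | τ ≤ f x y}).toReal
      ≤ τ * ∑ y : 𝒴, (μX {x | y ∈ C' x}).toReal := by linarith
  have hsize : ∑ y : 𝒴, (μX {x | τ ≤ f x y}).toReal
      ≤ ∑ y : 𝒴, (μX {x | y ∈ C' x}).toReal :=
    le_of_mul_le_mul_left hmm hτ
  rw [ge_iff_le, aux_size μX C' hC',
    aux_size μX (fun x => {y : 𝒴 | τ ≤ f x y}) (fun y => hCτ y)]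
  exact hsize
end
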